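/- arXiv:1509.06771 — 5 statements merged into one kernel-verified Lean document; each statement's English description precedes it below -/
import Mathlib

section
/- Let n ≥ 3 and let G be a finite subgroup of O(n) such that the orbit space S^{n−1}/G, equipped with the quotient topology, is simply connected. Then G is generated by the union of the stabilizer subgroups G_v = {g ∈ G : gv = v} over all points v ∈ S^{n−1}. -/
open Metric

noncomputable section

/-- Euclidean `n`-space. -/
abbrev Euc (n : ℕ) := EuclideanSpace ℝ (Fin n)

/-- The orthogonal group `O(n)`, realized as the group of linear isometric
self-equivalences of Euclidean `n`-space. -/
abbrev Orth (n : ℕ) := Euc n ≃ₗᵢ[ℝ] Euc n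

instance {n : ℕ} : MulAction (Orth n) (Euc n) where
  smul g x := g x
  one_smul _ := rfl
  mul_smul _ _ _ := rfl

instance {n : ℕ} : MulAction (Orth n) (sphere (0 : Euc n) 1) where
  smul g x := ⟨g x, by
    have hx := x.2
    simp only [mem_sphere_iff_norm, sub_zero] at hx ⊢
    rw [g.norm_map]; exact hx⟩
  one_smul x := Subtype.ext rfl
  mul_smul _ _ _ := Subtype.ext rfl

/-- The fixed-point subspace `{v : gv = v}` of an orthogonal transformation. -/
def fixedSubspace {n : ℕ} (g : Orth n) : Submodule ℝ (Euc n) :=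
  LinearMap.ker ((g.toLinearEquiv : Euc n →ₗ[ℝ] Euc n) - LinearMap.id)

/-- A reflection: an orthogonal transformation whose fixed-point subspace has
dimension `n - 1` (codimension one). -/
def IsReflection {n : ℕ} (g : Orth n) : Prop :=
  Module.finrank ℝ (fixedSubspace g) + 1 = n

/-- A rotation: an orthogonal transformation whose fixed-point subspace has
dimension `n - 2` (codimension two). -/
def IsRotation {n : ℕ} (g : Orth n) : Prop :=
  Module.finrank ℝ (fixedSubspace g) + 2 = n

/-! Let `N` be the subgroup of `Γ` generated by the elements having a fixed point in `X`. It is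
normal, and `Γ ⧸ N` acts freely on `X ⧸ N`: if `γ • x = n • x` with `n ∈ N`, then `n⁻¹ * γ` fixes
`x`. For finite `Γ` the projection `X ⧸ N → X ⧸ Γ` is the quotient map of this free action, hence
a covering map. A covering of a simply connected space by a path-connected one is injective, so
`Γ ⧸ N` also acts trivially on `X ⧸ N`, and is therefore trivial. -/

open MulAction Topology

theorem IsCoveringMap.injective_of_simplyConnectedSpace {E B : Type*} [TopologicalSpace E]
    [TopologicalSpace B] [PathConnectedSpace E] [SimplyConnectedSpace B] {p : E → B}
    (cov : IsCoveringMap p) : Function.Injective p := by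
  intro e₀ e₁ h
  let β := PathConnectedSpace.somePath e₀ e₁
  have hβ : (β.map cov.continuous).Homotopic ((Path.refl (p e₀)).cast rfl h.symm) :=
    SimplyConnectedSpace.paths_homotopic _ _
  have := cov.liftPath_apply_one_eq_of_homotopicRel (γ₁ := .const unitInterval (p e₀)) hβ e₀
    (by simp) rfl
  rwa [cov.liftPath_const (e := e₀) rfl, ← (cov.eq_liftPath_iff' _).mpr ⟨rfl, β.source⟩,
    ContinuousMap.const_apply, Path.coe_toContinuousMap, β.target, eq_comm] at this

instance Subgroup.continuousConstSMul {Γ X : Type*} [Group Γ] [MulAction Γ X] [TopologicalSpace X]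
    [ContinuousConstSMul Γ X] (N : Subgroup Γ) : ContinuousConstSMul N X :=
  ⟨fun n => continuous_const_smul (n : Γ)⟩

namespace MulAction

variable {Γ X : Type*} [Group Γ] [MulAction Γ X]

theorem normal_closure_setOf_exists_smul_eq_self :
    (Subgroup.closure {γ : Γ | ∃ x : X, γ • x = x}).Normal := by
  suffices h : Group.conjugatesOfSet {γ : Γ | ∃ x : X, γ • x = x} =
      {γ : Γ | ∃ x : X, γ • x = x} by
    rw [← h]; exact Subgroup.normalClosure_normal
  refine Set.Subset.antisymm (fun a ha => ?_) Group.subset_conjugatesOfSet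
  obtain ⟨b, ⟨x, hx⟩, hab⟩ := Group.mem_conjugatesOfSet_iff.mp ha
  obtain ⟨c, rfl⟩ := isConj_iff.mp hab
  exact ⟨c • x, by simp [mul_smul, hx]⟩

section OrbitQuotient

variable (N : Subgroup Γ)

variable (X) in
def orbitRel.Quotient.mapSubgroup : orbitRel.Quotient N X → orbitRel.Quotient Γ X :=
  Quotient.map' id fun _ _ h => orbitRel_subgroup_le N h

theorem orbitRel.Quotient.isQuotientMap_mapSubgroup [TopologicalSpace X] :
    IsQuotientMap (mapSubgroup X N) :=
  .of_comp continuous_quot_mk (continuous_id.quotient_map' _) isQuotientMap_quotient_mk'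

variable [N.Normal]

instance : MulAction (Γ ⧸ N) (orbitRel.Quotient N X) where
  smul := Quotient.map₂ (sa := QuotientGroup.leftRel N) (· • ·) fun a₁ a₂ ha x₁ x₂ hx => by
    obtain ⟨n, rfl⟩ := mem_orbit_iff.mp (orbitRel_apply.mp hx)
    have ha : a₁⁻¹ * a₂ ∈ N := QuotientGroup.leftRel_apply.mp ha
    refine orbitRel_apply.mpr ⟨⟨a₁ * n * a₂⁻¹, ?_⟩, ?_⟩
    · have := ‹N.Normal›.conj_mem _ (N.mul_mem n.2 (N.inv_mem ha)) a₁
      simpa [mul_assoc] using this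
    · simp [Subgroup.smul_def, mul_smul]
  one_smul y := Quotient.inductionOn y fun x => congrArg _ (one_smul Γ x)
  mul_smul q₁ q₂ y := Quotient.inductionOn₃ q₁ q₂ y fun a b x => congrArg _ (mul_smul a b x)

instance [TopologicalSpace X] [ContinuousConstSMul Γ X] :
    ContinuousConstSMul (Γ ⧸ N) (orbitRel.Quotient N X) where
  continuous_const_smul q := by
    induction q using QuotientGroup.induction_on with | H g =>
    exact isQuotientMap_quotient_mk'.continuous_iff.mpr
      (continuous_quot_mk.comp (continuous_const_smul g))

theorem isCancelSMul_quotient_of_forall_smul_eq_self_mem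
    (hN : ∀ (γ : Γ) (x : X), γ • x = x → γ ∈ N) :
    IsCancelSMul (Γ ⧸ N) (orbitRel.Quotient N X) := by
  refine isCancelSMul_iff_eq_one_of_smul_eq.mpr fun q y hq => ?_
  induction q using QuotientGroup.induction_on with | H g =>
  induction y using Quotient.inductionOn with | h x =>
  obtain ⟨n, hn⟩ := mem_orbit_iff.mp (orbitRel_apply.mp (Quotient.exact hq))
  have hfix : ((n : Γ)⁻¹ * g) • x = x := by
    rw [mul_smul, inv_smul_eq_iff]; exact hn.symm
  rw [QuotientGroup.eq_one_iff]
  simpa using N.mul_mem n.2 (hN _ x hfix)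

theorem orbitRel.Quotient.mapSubgroup_eq_iff {y₁ y₂ : orbitRel.Quotient N X} :
    mapSubgroup X N y₁ = mapSubgroup X N y₂ ↔ y₁ ∈ MulAction.orbit (Γ ⧸ N) y₂ := by
  induction y₁ using Quotient.inductionOn with | h x₁ =>
  induction y₂ using Quotient.inductionOn with | h x₂ =>
  refine ⟨fun h => ?_, fun ⟨q, hq⟩ => ?_⟩
  · obtain ⟨g, hg⟩ := mem_orbit_iff.mp (orbitRel_apply.mp (Quotient.exact h))
    exact ⟨g, congrArg _ hg⟩
  · induction q using QuotientGroup.induction_on with | H g =>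
    obtain ⟨n, hn⟩ := mem_orbit_iff.mp (orbitRel_apply.mp (Quotient.exact hq.symm))
    exact Quotient.sound (orbitRel_apply.mpr ⟨(n : Γ) * g, (mul_smul (n : Γ) g x₂).trans hn⟩)

theorem orbitRel.Quotient.isCoveringMap_mapSubgroup [Finite Γ] [TopologicalSpace X]
    [ContinuousConstSMul Γ X] [LocallyCompactSpace X] [T2Space X]
    (hN : ∀ (γ : Γ) (x : X), γ • x = x → γ ∈ N) : IsCoveringMap (mapSubgroup X N) :=
  have : LocallyCompactSpace (orbitRel.Quotient N X) :=
    isOpenQuotientMap_quotientMk.locallyCompactSpace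
  have := isCancelSMul_quotient_of_forall_smul_eq_self_mem N hN
  ((isQuotientMap_mapSubgroup N).isQuotientCoveringMap_of_properlyDiscontinuousSMul
    (G := Γ ⧸ N) (mapSubgroup_eq_iff N)).isCoveringMap

end OrbitQuotient

theorem closure_setOf_exists_smul_eq_self_eq_top [Finite Γ] [TopologicalSpace X]
    [ContinuousConstSMul Γ X] [LocallyCompactSpace X] [T2Space X] [PathConnectedSpace X]
    [SimplyConnectedSpace (orbitRel.Quotient Γ X)] :
    Subgroup.closure {γ : Γ | ∃ x : X, γ • x = x} = ⊤ := by
  set N := Subgroup.closure {γ : Γ | ∃ x : X, γ • x = x}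
  have : N.Normal := normal_closure_setOf_exists_smul_eq_self
  have hN : ∀ (γ : Γ) (x : X), γ • x = x → γ ∈ N :=
    fun γ x h => Subgroup.subset_closure ⟨x, h⟩
  have := isCancelSMul_quotient_of_forall_smul_eq_self_mem N hN
  refine eq_top_iff.mpr fun γ _ => ?_
  obtain ⟨x⟩ := PathConnectedSpace.nonempty (X := X)
  have hfix : (γ : Γ ⧸ N) • (Quotient.mk _ x : orbitRel.Quotient N X) = Quotient.mk _ x :=
    (orbitRel.Quotient.isCoveringMap_mapSubgroup N hN).injective_of_simplyConnectedSpace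
      (Quotient.sound (mem_orbit x γ))
  exact (QuotientGroup.eq_one_iff γ).mp (IsCancelSMul.eq_one_of_smul hfix)

end MulAction

instance (n : ℕ) : ContinuousConstSMul (Orth n) (sphere (0 : Euc n) 1) :=
  ⟨fun g => (g.continuous.comp continuous_subtype_val).subtype_mk _⟩

theorem pathConnectedSpace_sphere {n : ℕ} (hn : 2 ≤ n) :
    PathConnectedSpace (sphere (0 : Euc n) 1) := by
  refine isPathConnected_iff_pathConnectedSpace.mp (isPathConnected_sphere ?_ 0 zero_le_one)
  rw [← Module.finrank_eq_rank, finrank_euclideanSpace_fin]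
  exact_mod_cast hn

/-- If `n ≥ 3` and `G ≤ O(n)` is a finite subgroup such that `S^{n-1}/G` is simply
connected, then `G` is generated by the union of the stabilizers of points of the
sphere. -/
theorem stmt_4 (n : ℕ) (hn : 3 ≤ n) (G : Subgroup (Orth n)) [Finite G]
    (hsc : SimplyConnectedSpace (Quotient (MulAction.orbitRel G (sphere (0 : Euc n) 1)))) :
    Subgroup.closure (⋃ v : sphere (0 : Euc n) 1,
      {g : Orth n | g ∈ G ∧ g • (v : Euc n) = v}) = G := by
  have := pathConnectedSpace_sphere (n := n) (by omega)
  have htop :=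
    MulAction.closure_setOf_exists_smul_eq_self_eq_top (Γ := G) (X := sphere (0 : Euc n) 1)
  have himage : G.subtype '' {γ : G | ∃ x : sphere (0 : Euc n) 1, γ • x = x} =
      ⋃ v : sphere (0 : Euc n) 1, {g : Orth n | g ∈ G ∧ g • (v : Euc n) = v} := by
    ext g
    simp only [Set.mem_image, Set.mem_iUnion, Subgroup.coe_subtype]
    constructor
    · rintro ⟨γ, ⟨x, hx⟩, rfl⟩
      exact ⟨x, γ.2, congrArg Subtype.val hx⟩
    · rintro ⟨x, hg, hx⟩
      exact ⟨⟨g, hg⟩, ⟨x, Subtype.ext hx⟩, rfl⟩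
  rw [← himage, ← MonoidHom.map_closure, htop, ← MonoidHom.range_eq_map, Subgroup.range_subtype]
end
end

section
/- Let G be a finite subgroup of the unitary group U(n) generated by unitary reflections, and let f₁, …, f_n be homogeneous, algebraically independent polynomials generating the algebra ℂ[z₁, …, z_n]^G of G-invariant polynomials. Then the map ℂⁿ → ℂⁿ, v ↦ (f₁(v), …, f_n(v)), descends to the orbit space and the induced map ℂⁿ/G → ℂⁿ, [v] ↦ (f₁(v), …, f_n(v)), is a homeomorphism, where ℂⁿ/G carries the quotient topology. -/
/-!
Let `G` act on `ℂ[z₁, …, z_n]` by `(g • p)(v) = p(g⁻¹ v)`; the hypotheses say that its ring of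
invariants is `ℂ[f₁, …, f_n]`, a polynomial ring. The polynomial ring `ℂ[z]` is integral over the
invariants, and a finite group acts transitively on the primes of `ℂ[z]` lying over a given prime
of the invariants. By the Nullstellensatz, maximal ideals of `ℂ[z]` are points of `ℂⁿ` and
characters of `ℂ[f]` are arbitrary points `y ∈ ℂⁿ`, so `F = (f₁, …, f_n)` is surjective (lying
over) and its fibres are exactly the `G`-orbits (transitivity). Finally `F⁻¹(0) = {0}`, so
homogeneity in positive degrees gives `‖F v‖ ≥ c ‖v‖` for `‖v‖ ≥ 1`: `F` is proper, hence closed,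
and the continuous bijection `ℂⁿ/G → ℂⁿ` it induces is a homeomorphism.
-/

noncomputable section

/-- The unitary group `U(n)` of `ℂⁿ`, realized as the unitary group of `n × n`
complex matrices. -/
abbrev UGrp (n : ℕ) := Matrix.unitaryGroup (Fin n) ℂ

/-- The natural action of `U(n)` on `ℂⁿ` by matrix-vector multiplication. -/
instance {n : ℕ} : MulAction (UGrp n) (Fin n → ℂ) where
  smul g v := Matrix.mulVec g.1 v
  one_smul v := Matrix.one_mulVec v
  mul_smul g h v := (Matrix.mulVec_mulVec v g.1 h.1).symm

/-- A unitary reflection: an element of `U(n)` of finite order whose fixed-point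
subspace `{v : gv = v}` is a complex hyperplane (complex dimension `n - 1`). -/
def IsUnitaryReflection {n : ℕ} (g : UGrp n) : Prop :=
  IsOfFinOrder g ∧
  Module.finrank ℂ ↥(LinearMap.ker ((g.1 - 1).mulVecLin)) + 1 = n

open MvPolynomial
open scoped Pointwise

namespace Matrix.unitaryGroup

variable {σ R : Type*} [Fintype σ] [DecidableEq σ] [CommRing R] [StarRing R]

-- Precomposition with `g⁻¹` rather than `g` is what makes this a left action.
instance : SMul (unitaryGroup σ R) (MvPolynomial σ R) where
  smul g p := bind₁ (g⁻¹ : unitaryGroup σ R).1.toMvPolynomial p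

lemma smul_def (g : unitaryGroup σ R) (p : MvPolynomial σ R) :
    g • p = bind₁ (g⁻¹ : unitaryGroup σ R).1.toMvPolynomial p := rfl

instance : MulSemiringAction (unitaryGroup σ R) (MvPolynomial σ R) where
  one_smul p := by
    rw [smul_def, inv_one, OneMemClass.coe_one, toMvPolynomial_one, bind₁_X_left,
      AlgHom.id_apply]
  mul_smul g h p := by
    rw [smul_def, smul_def, smul_def, bind₁_bind₁, _root_.mul_inv_rev]
    exact congrArg (bind₁ · p) (funext (toMvPolynomial_mul _ _))
  smul_zero _ := map_zero _
  smul_add _ := map_add _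
  smul_one _ := map_one _
  smul_mul _ := map_mul _

instance : SMulCommClass (unitaryGroup σ R) R (MvPolynomial σ R) where
  smul_comm _ r p := map_smul (bind₁ _) r p

lemma eval_smul (g : unitaryGroup σ R) (p : MvPolynomial σ R) (v : σ → R) :
    eval v (g • p) = eval ((g⁻¹ : unitaryGroup σ R).1 *ᵥ v) p := by
  rw [smul_def, ← funext (toMvPolynomial_eval_eq_apply (g⁻¹ : unitaryGroup σ R).1 · v)]
  exact eval₂Hom_bind₁ (RingHom.id R) v _ p

end Matrix.unitaryGroup

instance FixedPoints.isInvariant_subalgebra {A B G : Type*} [CommSemiring A] [CommSemiring B]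
    [Algebra A B] [Group G] [MulSemiringAction G B] [SMulCommClass G A B] :
    Algebra.IsInvariant (FixedPoints.subalgebra A B G) B G :=
  ⟨fun b hb => ⟨⟨b, hb⟩, rfl⟩⟩

theorem AlgebraicIndependent.exists_algHom_adjoin_eq {ι K A : Type*} [CommRing K] [CommRing A]
    [Algebra K A] {f : ι → A} (hf : AlgebraicIndependent K f) (y : ι → K) :
    ∃ χ : Algebra.adjoin K (Set.range f) →ₐ[K] K,
      ∀ i, χ ⟨f i, Algebra.subset_adjoin ⟨i, rfl⟩⟩ = y i := by
  refine ⟨(aeval y).comp hf.repr, fun i => ?_⟩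
  have : hf.repr ⟨f i, Algebra.subset_adjoin ⟨i, rfl⟩⟩ = X i :=
    hf.aevalEquiv.symm_apply_eq.2 (Subtype.ext (aeval_X f i).symm)
  rw [AlgHom.comp_apply, this, aeval_X]

namespace MvPolynomial

theorem eval_eq_of_mem_adjoin {σ ι R : Type*} [CommSemiring R] {f : ι → MvPolynomial σ R}
    {v w : σ → R} (h : ∀ i, eval v (f i) = eval w (f i)) {p : MvPolynomial σ R}
    (hp : p ∈ Algebra.adjoin R (Set.range f)) : eval v p = eval w p :=
  Algebra.adjoin_le (S := AlgHom.equalizer (aeval v) (aeval w)) (Set.range_subset_iff.2 h) hp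

section Points

variable {σ K : Type*} [Field K]

theorem vanishingIdeal_singleton_injective :
    Function.Injective (fun v : σ → K => vanishingIdeal K {v}) := by
  intro v w (h : vanishingIdeal K {v} = vanishingIdeal K {w})
  funext i
  have hv : X i - C (v i) ∈ vanishingIdeal K {v} := by simp
  have hw : X i - C (v i) ∈ vanishingIdeal K {w} := h ▸ hv
  simpa [sub_eq_zero, eq_comm] using hw

theorem exists_eval_eq_of_isIntegral [IsAlgClosed K] [Finite σ]
    {A : Subalgebra K (MvPolynomial σ K)} [Algebra.IsIntegral A (MvPolynomial σ K)]
    (χ : A →ₐ[K] K) :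
    ∃ v : σ → K, ∀ a : A, eval v a = χ a := by
  have hχ : (RingHom.ker χ).IsMaximal :=
    RingHom.ker_isMaximal_of_surjective χ fun c => ⟨algebraMap K A c, χ.commutes c⟩
  obtain ⟨M, hM, hMχ⟩ := Ideal.exists_ideal_over_maximal_of_isIntegral (S := MvPolynomial σ K)
    (RingHom.ker χ) (by simp [(RingHom.injective_iff_ker_eq_bot (algebraMap A _)).1
      Subtype.val_injective])
  obtain ⟨v, rfl⟩ := isMaximal_iff_eq_vanishingIdeal_singleton.1 hM
  refine ⟨v, fun a => ?_⟩
  have : a - algebraMap K A (χ a) ∈ RingHom.ker χ := by simp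
  rw [← hMχ, Ideal.mem_comap, mem_vanishingIdeal_singleton_iff, aeval_eq_eval] at this
  simpa [sub_eq_zero] using this

theorem surjective_eval_of_isIntegral [IsAlgClosed K] [Finite σ] {ι : Type*}
    {f : ι → MvPolynomial σ K} (hf : AlgebraicIndependent K f)
    [Algebra.IsIntegral (Algebra.adjoin K (Set.range f)) (MvPolynomial σ K)] :
    Function.Surjective fun (v : σ → K) i => eval v (f i) := by
  intro y
  obtain ⟨χ, hχ⟩ := hf.exists_algHom_adjoin_eq y
  obtain ⟨v, hv⟩ := exists_eval_eq_of_isIntegral χ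
  refine ⟨v, ?_⟩
  funext i
  exact (hv ⟨f i, Algebra.subset_adjoin ⟨i, rfl⟩⟩).trans (hχ i)

end Points

section Invariants

variable {σ K G : Type*} [Field K] [Group G] [MulAction G (σ → K)]
  [MulSemiringAction G (MvPolynomial σ K)]

theorem smul_vanishingIdeal_singleton
    (heval : ∀ (g : G) p (v : σ → K), eval v (g • p) = eval (g⁻¹ • v) p) (g : G) (v : σ → K) :
    g • vanishingIdeal K {v} = vanishingIdeal K {g • v} := by
  ext p
  rw [Ideal.mem_pointwise_smul_iff_inv_smul_mem, mem_vanishingIdeal_singleton_iff,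
    mem_vanishingIdeal_singleton_iff, aeval_eq_eval, aeval_eq_eval, heval, inv_inv]

variable [SMulCommClass G K (MvPolynomial σ K)]

theorem mem_fixedPoints_subalgebra_iff [Infinite K]
    (heval : ∀ (g : G) p (v : σ → K), eval v (g • p) = eval (g⁻¹ • v) p)
    (p : MvPolynomial σ K) :
    p ∈ FixedPoints.subalgebra K (MvPolynomial σ K) G ↔
      ∀ (g : G) v, eval (g • v) p = eval v p := by
  refine ⟨fun hp g v => ?_, fun hp g => funext fun v => ?_⟩
  · rw [← inv_inv g, ← heval, hp g⁻¹]
  · rw [heval, hp]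

theorem fixedPoints_subalgebra_eq_adjoin [Infinite K]
    (heval : ∀ (g : G) p (v : σ → K), eval v (g • p) = eval (g⁻¹ • v) p)
    {ι : Type*} {f : ι → MvPolynomial σ K}
    (hinv : ∀ i (g : G) v, eval (g • v) (f i) = eval v (f i))
    (hgen : ∀ p, (∀ (g : G) v, eval (g • v) p = eval v p) → p ∈ Algebra.adjoin K (Set.range f)) :
    FixedPoints.subalgebra K (MvPolynomial σ K) G = Algebra.adjoin K (Set.range f) := by
  refine le_antisymm (fun p hp => hgen p ((mem_fixedPoints_subalgebra_iff heval p).1 hp)) ?_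
  exact Algebra.adjoin_le (Set.range_subset_iff.2 fun i =>
    (mem_fixedPoints_subalgebra_iff heval _).2 (hinv i))

/-- The maximal ideals of `v` and `w` lie over the same prime of the invariant ring, and `G`
permutes the primes over a given prime transitively. -/
theorem exists_smul_eq_of_eval_eq [Finite G]
    (heval : ∀ (g : G) p (v : σ → K), eval v (g • p) = eval (g⁻¹ • v) p) {v w : σ → K}
    (h : ∀ p ∈ FixedPoints.subalgebra K (MvPolynomial σ K) G, eval v p = eval w p) :
    ∃ g : G, g • v = w := by
  have hvw : (vanishingIdeal K {v}).under (FixedPoints.subalgebra K (MvPolynomial σ K) G) =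
      (vanishingIdeal K {w}).under _ := by
    ext p
    simp only [Ideal.under, Ideal.mem_comap, mem_vanishingIdeal_singleton_iff]
    rw [Subalgebra.algebraMap_eq]
    exact Iff.of_eq (congrArg (· = 0) (h p p.2))
  obtain ⟨g, hg⟩ := Algebra.IsInvariant.exists_smul_of_under_eq _ _ G _ _ hvw
  rw [smul_vanishingIdeal_singleton heval] at hg
  exact ⟨g, (vanishingIdeal_singleton_injective hg).symm⟩

end Invariants

namespace IsHomogeneous

variable {σ R : Type*} [CommSemiring R] {p : MvPolynomial σ R} {m : ℕ}

theorem eval_smul (hp : p.IsHomogeneous m) (t : R) (v : σ → R) :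
    eval (t • v) p = t ^ m * eval v p := by
  rw [eval_eq, eval_eq, Finset.mul_sum]
  refine Finset.sum_congr rfl fun d hd => ?_
  have hdeg : ∑ i ∈ d.support, d i = m := by
    by_contra h
    exact mem_support_iff.1 hd (hp.coeff_eq_zero h)
  simp_rw [Pi.smul_apply, smul_eq_mul, mul_pow, Finset.prod_mul_distrib,
    Finset.prod_pow_eq_pow_sum, hdeg]
  ring

theorem eval_zero_of_ne_zero (hp : p.IsHomogeneous m) (hm : m ≠ 0) : eval 0 p = 0 := by
  simpa [zero_pow hm] using hp.eval_smul 0 0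

theorem ne_zero_of_transcendental {K : Type*} [Field K] {p : MvPolynomial σ K}
    (hp : p.IsHomogeneous m) (ht : Transcendental K p) : m ≠ 0 := by
  rintro rfl
  rw [← totalDegree_zero_iff_isHomogeneous, totalDegree_eq_zero_iff_eq_C] at hp
  exact ht (hp ▸ isAlgebraic_algebraMap (p.coeff 0))

end IsHomogeneous

section Proper

variable {𝕜 σ ι : Type*} [RCLike 𝕜] [Fintype σ] [Fintype ι] {f : ι → MvPolynomial σ 𝕜}
  {d : ι → ℕ}

theorem exists_pos_mul_norm_le_norm_eval (hhom : ∀ i, (f i).IsHomogeneous (d i))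
    (hd : ∀ i, d i ≠ 0) (hzero : ∀ v : σ → 𝕜, (∀ i, eval v (f i) = 0) → v = 0) :
    ∃ c > 0, ∀ v : σ → 𝕜, 1 ≤ ‖v‖ → c * ‖v‖ ≤ ‖fun i => eval v (f i)‖ := by
  set F : (σ → 𝕜) → ι → 𝕜 := fun v i => eval v (f i)
  have hF : Continuous F := continuous_pi fun i => continuous_eval (f i)
  obtain ⟨c, hc, hcF⟩ := (isCompact_sphere (0 : σ → 𝕜) 1).exists_forall_le'
    (continuous_norm.comp hF).continuousOn (a := 0) fun u hu => by
      refine norm_pos_iff.2 fun hFu => ?_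
      have : u = 0 := hzero u fun i => congrFun hFu i
      simp [this] at hu
  refine ⟨c, hc, fun v hv => ?_⟩
  set t := ‖v‖
  have ht : (t : 𝕜) ≠ 0 := RCLike.ofReal_ne_zero.2 (by positivity)
  set u := (t : 𝕜)⁻¹ • v
  have hu : ‖u‖ = 1 := by
    rw [norm_smul, norm_inv, RCLike.norm_ofReal, abs_of_nonneg (norm_nonneg v),
      inv_mul_cancel₀ (by positivity)]
  have hFv : ∀ i, F v i = (t : 𝕜) ^ d i * F u i := fun i => by
    rw [show v = (t : 𝕜) • u from (smul_inv_smul₀ ht v).symm]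
    exact (hhom i).eval_smul _ _
  have hscale : ‖(t : 𝕜) • F u‖ ≤ ‖F v‖ := by
    refine (pi_norm_le_iff_of_nonneg (norm_nonneg _)).2 fun i => ?_
    calc ‖(t : 𝕜) • F u i‖ = t ^ 1 * ‖F u i‖ := by
          rw [norm_smul, RCLike.norm_ofReal, abs_of_nonneg (norm_nonneg v), pow_one]
      _ ≤ t ^ d i * ‖F u i‖ := by
          gcongr
          exact Nat.one_le_iff_ne_zero.2 (hd i)
      _ = ‖F v i‖ := by
          rw [hFv, norm_mul, norm_pow, RCLike.norm_ofReal, abs_of_nonneg (norm_nonneg v)]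
      _ ≤ ‖F v‖ := norm_le_pi_norm (F v) i
  calc c * t ≤ ‖F u‖ * t := by gcongr; exact hcF u (mem_sphere_zero_iff_norm.2 hu)
    _ = ‖(t : 𝕜) • F u‖ := by
        rw [norm_smul, RCLike.norm_ofReal, abs_of_nonneg (norm_nonneg v), mul_comm]
    _ ≤ ‖F v‖ := hscale

theorem isProperMap_eval (hhom : ∀ i, (f i).IsHomogeneous (d i)) (hd : ∀ i, d i ≠ 0)
    (hzero : ∀ v : σ → 𝕜, (∀ i, eval v (f i) = 0) → v = 0) :
    IsProperMap fun (v : σ → 𝕜) i => eval v (f i) := by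
  have hF : Continuous fun (v : σ → 𝕜) i => eval v (f i) :=
    continuous_pi fun i => continuous_eval (f i)
  refine isProperMap_iff_isCompact_preimage.2 ⟨hF, fun K hK => ?_⟩
  obtain ⟨c, hc, hcv⟩ := exists_pos_mul_norm_le_norm_eval hhom hd hzero
  obtain ⟨R, hR⟩ := hK.isBounded.subset_closedBall 0
  refine Metric.isCompact_of_isClosed_isBounded (hK.isClosed.preimage hF)
    ((Metric.isBounded_closedBall (x := 0) (r := max 1 (R / c))).subset fun v hv => ?_)
  rw [mem_closedBall_zero_iff]
  rcases le_total ‖v‖ 1 with h | h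
  · exact h.trans (le_max_left _ _)
  · refine le_max_of_le_right ((le_div_iff₀ hc).2 ?_)
    rw [mul_comm]
    exact (hcv v h).trans (mem_closedBall_zero_iff.1 (hR hv))

end Proper

end MvPolynomial

theorem IsClosedMap.isHomeomorph_quotient_lift {X Y : Type*} [TopologicalSpace X]
    [TopologicalSpace Y] {s : Setoid X} {F : X → Y} (hF : IsClosedMap F) (hcont : Continuous F)
    (hsurj : Function.Surjective F) (hs : ∀ a b, s a b ↔ F a = F b) :
    IsHomeomorph (Quotient.lift F fun a b h => (hs a b).1 h) :=
  isHomeomorph_iff_isQuotientMap_injective.2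
    ⟨isQuotientMap_quotient_mk'.of_comp_isQuotientMap (hF.isQuotientMap hcont hsurj),
      Quotient.ind₂ fun a b h => Quotient.sound ((hs a b).2 h)⟩

theorem stmt_8_general (n : ℕ) (G : Subgroup (UGrp n)) [Finite G]
    (f : Fin n → MvPolynomial (Fin n) ℂ) (d : Fin n → ℕ)
    (hhom : ∀ i, (f i).IsHomogeneous (d i))
    (hindep : AlgebraicIndependent ℂ f)
    (hinv : ∀ i, ∀ g ∈ G, ∀ v : Fin n → ℂ,
      MvPolynomial.eval (Matrix.mulVec (g : UGrp n).1 v) (f i) = MvPolynomial.eval v (f i))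
    (hgenalg : ∀ p : MvPolynomial (Fin n) ℂ,
      (∀ g ∈ G, ∀ v : Fin n → ℂ,
        MvPolynomial.eval (Matrix.mulVec (g : UGrp n).1 v) p = MvPolynomial.eval v p) →
      p ∈ Algebra.adjoin ℂ (Set.range f)) :
    ∃ φ : Quotient (MulAction.orbitRel G (Fin n → ℂ)) ≃ₜ (Fin n → ℂ),
      ∀ v : Fin n → ℂ,
        φ (Quotient.mk (MulAction.orbitRel G (Fin n → ℂ)) v) =
          fun i => MvPolynomial.eval v (f i) := by
  set F : (Fin n → ℂ) → Fin n → ℂ := fun v i => eval v (f i)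
  have heval : ∀ (g : G) p (v : Fin n → ℂ), eval v (g • p) = eval (g⁻¹ • v) p :=
    fun g => Matrix.unitaryGroup.eval_smul (g : UGrp n)
  have hfixed := fixedPoints_subalgebra_eq_adjoin heval (fun i g => hinv i g.1 g.2)
    fun p hp => hgenalg p fun g hg => hp ⟨g, hg⟩
  have hfibre : ∀ v w, F v = F w → ∃ g : G, g • v = w := fun v w h =>
    exists_smul_eq_of_eval_eq heval fun p hp => eval_eq_of_mem_adjoin (congrFun h) (hfixed ▸ hp)
  have horbit : ∀ v w, MulAction.orbitRel G _ v w ↔ F v = F w := by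
    refine fun v w => ⟨?_, fun h => (hfibre w v h.symm).imp fun _ => id⟩
    rintro ⟨g, rfl⟩
    funext i
    exact hinv i g.1 g.2 w
  have : Algebra.IsIntegral (Algebra.adjoin ℂ (Set.range f)) (MvPolynomial (Fin n) ℂ) :=
    hfixed ▸ Algebra.IsInvariant.isIntegral _ _ G
  have hd : ∀ i, d i ≠ 0 := fun i => (hhom i).ne_zero_of_transcendental (hindep.transcendental i)
  have hzero : ∀ v, (∀ i, eval v (f i) = 0) → v = 0 := fun v hv => by
    have hF0 : F 0 = F v :=
      funext fun i => ((hhom i).eval_zero_of_ne_zero (hd i)).trans (hv i).symm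
    obtain ⟨g, rfl⟩ := hfibre 0 v hF0
    exact Matrix.mulVec_zero _
  have hproper := isProperMap_eval hhom hd hzero
  exact ⟨(hproper.isClosedMap.isHomeomorph_quotient_lift hproper.continuous
    (surjective_eval_of_isIntegral hindep) horbit).homeomorph, fun v => rfl⟩

/-- Chevalley: if `G ≤ U(n)` is a finite unitary reflection group and
`f₁, …, f_n` are homogeneous, algebraically independent generators of the algebra
of `G`-invariant polynomials, then `v ↦ (f₁(v), …, f_n(v))` descends to a
homeomorphism `ℂⁿ/G ≃ₜ ℂⁿ`. -/
theorem stmt_8 (n : ℕ) (G : Subgroup (UGrp n)) [Finite G]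
    (hgen : Subgroup.closure {g : UGrp n | g ∈ G ∧ IsUnitaryReflection g} = G)
    (f : Fin n → MvPolynomial (Fin n) ℂ) (d : Fin n → ℕ)
    (hhom : ∀ i, (f i).IsHomogeneous (d i))
    (hindep : AlgebraicIndependent ℂ f)
    (hinv : ∀ i, ∀ g ∈ G, ∀ v : Fin n → ℂ,
      MvPolynomial.eval (Matrix.mulVec (g : UGrp n).1 v) (f i) = MvPolynomial.eval v (f i))
    (hgenalg : ∀ p : MvPolynomial (Fin n) ℂ,
      (∀ g ∈ G, ∀ v : Fin n → ℂ,
        MvPolynomial.eval (Matrix.mulVec (g : UGrp n).1 v) p = MvPolynomial.eval v p) →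
      p ∈ Algebra.adjoin ℂ (Set.range f)) :
    ∃ φ : Quotient (MulAction.orbitRel G (Fin n → ℂ)) ≃ₜ (Fin n → ℂ),
      ∀ v : Fin n → ℂ,
        φ (Quotient.mk (MulAction.orbitRel G (Fin n → ℂ)) v) =
          fun i => MvPolynomial.eval v (f i) :=
  stmt_8_general n G f d hhom hindep hinv hgenalg
end
end

section
/- Let W be a finite subgroup of O(n) generated by reflections, let v₀ ∈ ℝⁿ satisfy gv₀ ≠ v₀ for all g ∈ W \ {e}, and let Λ = ⋂_{g ∈ W} {v ∈ ℝⁿ : ⟨v, v₀⟩ ≥ ⟨v, gv₀⟩} be the corresponding Dirichlet domain. Then every W-orbit in ℝⁿ meets Λ in exactly one point, and consequently the restriction of the quotient map ℝⁿ → ℝⁿ/W to Λ is a homeomorphism from Λ (with the subspace topology) onto the orbit space ℝⁿ/W (with the quotient topology). -/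
open Metric

noncomputable section

/-- The Dirichlet domain of a finite subgroup `G ≤ O(n)` with respect to a point
`v₀`: the set `⋂_{g ∈ G} {v : ⟨v, v₀⟩ ≥ ⟨v, g v₀⟩}`. -/
def dirichletDomain (n : ℕ) (G : Subgroup (Orth n)) (v₀ : Euc n) : Set (Euc n) :=
  ⋂ g ∈ G, {v : Euc n | (inner ℝ v (g • v₀) : ℝ) ≤ inner ℝ v v₀}


/-!
The roots of `W` are the unit vectors `u` whose reflection `s_u` lies in `W`. None is orthogonal
to `v₀`, since `s_u` would fix `v₀`, so the sign of `⟪v₀, u⟫` splits them into positive and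
negative roots. A point of an orbit maximising `⟪·, v₀⟫` lies in `Λ`, and `Λ` lies in the closed
chamber `{x | ⟪x, u⟫ ≥ 0 for all positive roots u}`.

The extreme rays of the cone spanned by the positive roots are simple roots: each simple
reflection permutes the other positive roots, and the simple reflections generate `W`. Let a word
`m s_α` in simple reflections map a point `x` of the chamber to a point `y` of it. If `m α` is
positive then `⟪y, m α⟫ = -⟪x, α⟫` forces `⟪x, α⟫ = 0`, so `s_α` fixes `x`; otherwise the deletion
condition shortens the word. By induction on the length, `y = x`.

Restricted to the closed set `Λ`, the quotient map is therefore a continuous bijection, and it is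
closed because the saturation of a closed set is the finite union of its translates.
-/

open RealInnerProductSpace Submodule

section HyperplaneReflection

variable {E : Type*} [NormedAddCommGroup E] [InnerProductSpace ℝ E]

def hyperplaneReflection (u : E) : E ≃ₗᵢ[ℝ] E := (ℝ ∙ u)ᗮ.reflection

lemma hyperplaneReflection_apply {u : E} (hu : ‖u‖ = 1) (x : E) :
    hyperplaneReflection u x = x - (2 * ⟪x, u⟫) • u := by
  rw [hyperplaneReflection, reflection_orthogonal_apply, reflection_singleton_apply, hu,
    real_inner_comm]
  simp only [RCLike.ofReal_real_eq_id, id, one_pow, div_one]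
  module

lemma hyperplaneReflection_self (u : E) : hyperplaneReflection u u = -u :=
  reflection_orthogonalComplement_singleton_eq_neg u

lemma hyperplaneReflection_eq_self_of_inner_eq_zero {u x : E} (h : ⟪x, u⟫ = 0) :
    hyperplaneReflection u x = x :=
  reflection_mem_subspace_eq_self (mem_orthogonal_singleton_iff_inner_left.2 h)

lemma hyperplaneReflection_smul {c : ℝ} (hc : c ≠ 0) (u : E) :
    hyperplaneReflection (c • u) = hyperplaneReflection u := by
  simp only [hyperplaneReflection, span_singleton_smul_eq (IsUnit.mk0 c hc)]

lemma hyperplaneReflection_neg (u : E) : hyperplaneReflection (-u) = hyperplaneReflection u := by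
  rw [← neg_one_smul ℝ u, hyperplaneReflection_smul (by norm_num)]

lemma hyperplaneReflection_zero : hyperplaneReflection (0 : E) = 1 := by
  ext x
  exact reflection_mem_subspace_eq_self (by simp)

lemma hyperplaneReflection_ne_one {u : E} (hu : u ≠ 0) : hyperplaneReflection u ≠ 1 := by
  intro h
  have hu' : u ∈ (ℝ ∙ u)ᗮ := (reflection_eq_self_iff u).1 (by rw [← hyperplaneReflection, h]; rfl)
  exact hu (inner_self_eq_zero.1 (mem_orthogonal_singleton_iff_inner_right.1 hu'))

lemma hyperplaneReflection_hyperplaneReflection (u x : E) :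
    hyperplaneReflection u (hyperplaneReflection u x) = x :=
  reflection_reflection _ x

lemma hyperplaneReflection_mul_self (u : E) :
    hyperplaneReflection u * hyperplaneReflection u = 1 :=
  reflection_mul_reflection _

lemma hyperplaneReflection_inv (u : E) :
    (hyperplaneReflection u)⁻¹ = hyperplaneReflection u :=
  reflection_inv

lemma hyperplaneReflection_map (g : E ≃ₗᵢ[ℝ] E) (u : E) :
    hyperplaneReflection (g u) = g * hyperplaneReflection u * g⁻¹ := by
  have : (ℝ ∙ g u)ᗮ = (ℝ ∙ u)ᗮ.map (g.toLinearEquiv : E →ₗ[ℝ] E) := by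
    rw [map_orthogonal_equiv, map_span, Set.image_singleton]
    rfl
  ext x
  simp only [hyperplaneReflection, this, reflection_map_apply]
  rfl

end HyperplaneReflection

section Roots

variable {E : Type*} [NormedAddCommGroup E] [InnerProductSpace ℝ E]
  {W : Subgroup (E ≃ₗᵢ[ℝ] E)} {v₀ u : E}

def rootSet (W : Subgroup (E ≃ₗᵢ[ℝ] E)) : Set E :=
  {u | ‖u‖ = 1 ∧ hyperplaneReflection u ∈ W}

def positiveRoots (W : Subgroup (E ≃ₗᵢ[ℝ] E)) (v₀ : E) : Set E :=
  {u | u ∈ rootSet W ∧ 0 < ⟪v₀, u⟫}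

lemma neg_mem_rootSet (hu : u ∈ rootSet W) : -u ∈ rootSet W :=
  ⟨by rw [norm_neg, hu.1], by rw [hyperplaneReflection_neg]; exact hu.2⟩

lemma apply_mem_rootSet {g : E ≃ₗᵢ[ℝ] E} (hg : g ∈ W) (hu : u ∈ rootSet W) :
    g u ∈ rootSet W :=
  ⟨by rw [g.norm_map, hu.1], by
    rw [hyperplaneReflection_map]
    exact W.mul_mem (W.mul_mem hg hu.2) (W.inv_mem hg)⟩

lemma inner_ne_zero_of_mem_rootSet (hv₀ : ∀ g ∈ W, g ≠ 1 → g v₀ ≠ v₀) (hu : u ∈ rootSet W) :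
    ⟪v₀, u⟫ ≠ 0 := fun h =>
  hv₀ _ hu.2 (hyperplaneReflection_ne_one (norm_ne_zero_iff.1 (by rw [hu.1]; exact one_ne_zero)))
    (hyperplaneReflection_eq_self_of_inner_eq_zero h)

lemma mem_positiveRoots_or_neg_mem (hv₀ : ∀ g ∈ W, g ≠ 1 → g v₀ ≠ v₀) (hu : u ∈ rootSet W) :
    u ∈ positiveRoots W v₀ ∨ -u ∈ positiveRoots W v₀ := by
  rcases (inner_ne_zero_of_mem_rootSet hv₀ hu).lt_or_gt with h | h
  · exact .inr ⟨neg_mem_rootSet hu, by rw [inner_neg_right]; linarith⟩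
  · exact .inl ⟨hu, h⟩

/-- A positive root `u` is recovered from its reflection `r` as the direction of `v₀ - r v₀`. -/
lemma positiveRoots_finite [Finite W] : (positiveRoots W v₀).Finite := by
  let direction (r : W) : E := ‖v₀ - (r : E ≃ₗᵢ[ℝ] E) v₀‖⁻¹ • (v₀ - (r : E ≃ₗᵢ[ℝ] E) v₀)
  refine (Set.finite_range direction).subset ?_
  rintro u ⟨⟨hu, huW⟩, hpos⟩
  refine ⟨⟨_, huW⟩, ?_⟩
  have hdiff : v₀ - hyperplaneReflection u v₀ = (2 * ⟪v₀, u⟫) • u := by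
    rw [hyperplaneReflection_apply hu]; abel
  have hc : 0 < 2 * ⟪v₀, u⟫ := by positivity
  show ‖v₀ - hyperplaneReflection u v₀‖⁻¹ • (v₀ - hyperplaneReflection u v₀) = u
  rw [hdiff, norm_smul, hu, mul_one, Real.norm_of_nonneg hc.le, smul_smul,
    inv_mul_cancel₀ hc.ne', one_smul]

end Roots

section ConeGenerators

variable {E : Type*} [NormedAddCommGroup E] [InnerProductSpace ℝ E] {S P Δ : Set E}
  {v x z α : E}

lemma inner_nonneg_of_mem_hull (hS : ∀ s ∈ S, 0 ≤ ⟪v, s⟫) (hx : x ∈ PointedCone.hull ℝ S) :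
    0 ≤ ⟪v, x⟫ := by
  induction hx using Submodule.span_induction with
  | mem s hs => exact hS s hs
  | zero => simp
  | add y z _ _ hy hz => rw [inner_add_right]; exact add_nonneg hy hz
  | smul c y _ hy =>
    change 0 ≤ ⟪v, (c : ℝ) • y⟫
    rw [real_inner_smul_right]
    exact mul_nonneg c.2 hy

lemma eq_zero_or_inner_pos_of_mem_hull (hS : ∀ s ∈ S, 0 < ⟪v, s⟫)
    (hx : x ∈ PointedCone.hull ℝ S) : x = 0 ∨ 0 < ⟪v, x⟫ := by
  induction hx using Submodule.span_induction with
  | mem s hs => exact .inr (hS s hs)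
  | zero => exact .inl rfl
  | add y z _ _ hy hz =>
    rw [inner_add_right]
    rcases hy with rfl | hy
    · rcases hz with rfl | hz
      · exact .inl (add_zero 0)
      · exact .inr (by simpa using hz)
    · rcases hz with rfl | hz
      · exact .inr (by simpa using hy)
      · exact .inr (add_pos hy hz)
  | smul c y _ hy =>
    rcases hy with rfl | hy
    · exact .inl (smul_zero c)
    rcases eq_or_ne c 0 with rfl | hc
    · exact .inl (zero_smul _ y)
    · right
      change 0 < ⟪v, (c : ℝ) • y⟫
      rw [real_inner_smul_right]
      exact mul_pos (NNReal.coe_pos.2 (pos_of_ne_zero hc)) hy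

lemma exists_eq_smul_add_of_mem_hull (hα : α ∈ Δ) (hx : x ∈ PointedCone.hull ℝ Δ) :
    ∃ t : ℝ, 0 ≤ t ∧ ∃ r ∈ PointedCone.hull ℝ (Δ \ {α}), x = t • α + r := by
  rw [← Set.insert_eq_of_mem hα, ← Set.insert_sdiff_singleton] at hx
  obtain ⟨t, r, hr, rfl⟩ := Submodule.mem_span_insert.1 hx
  exact ⟨t, t.2, r, hr, rfl⟩

lemma exists_mem_inner_pos_of_mem_hull (hx : x ∈ PointedCone.hull ℝ S) (hx0 : x ≠ 0) :
    ∃ s ∈ S, 0 < ⟪x, s⟫ := by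
  by_contra! h
  have := inner_nonneg_of_mem_hull (v := -x)
    (fun s hs => by rw [inner_neg_left]; linarith [h s hs]) hx
  rw [inner_neg_left] at this
  exact hx0 (real_inner_self_nonpos.1 (by linarith))

def IsMinimalConeGenerator (P Δ : Set E) : Prop :=
  Minimal (fun Δ : Set E => Δ ⊆ P ∧ P ⊆ PointedCone.hull ℝ Δ) Δ

lemma exists_isMinimalConeGenerator (hP : P.Finite) : ∃ Δ, IsMinimalConeGenerator P Δ :=
  (hP.finite_subsets.subset fun _ hΔ => hΔ.1).exists_minimal
    ⟨P, subset_rfl, PointedCone.subset_hull⟩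

namespace IsMinimalConeGenerator

lemma notMem_hull_diff_singleton (h : IsMinimalConeGenerator P Δ) (hα : α ∈ Δ) :
    α ∉ PointedCone.hull ℝ (Δ \ {α}) := by
  intro hmem
  have hle : PointedCone.hull ℝ Δ ≤ PointedCone.hull ℝ (Δ \ {α}) := by
    refine Submodule.span_le.2 fun γ hγ => ?_
    rcases eq_or_ne γ α with rfl | hne
    · exact hmem
    · exact PointedCone.subset_hull ⟨hγ, hne⟩
  exact (h.2 ⟨Set.sdiff_subset.trans h.1.1, h.1.2.trans hle⟩ Set.sdiff_subset hα).2 rfl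

lemma smul_ne (h : IsMinimalConeGenerator P Δ) (hpos : ∀ u ∈ P, 0 < ⟪v, u⟫) (hα : α ∈ Δ)
    (hz : z ∈ PointedCone.hull ℝ (Δ \ {α})) (hz0 : z ≠ 0) (c : ℝ) : c • α ≠ z := by
  rintro rfl
  rcases lt_or_ge 0 c with hc | hc
  · refine h.notMem_hull_diff_singleton hα ?_
    simpa [smul_smul, hc.ne'] using PointedCone.smul_mem _ (inv_nonneg.2 hc.le) hz
  · have hz_pos := (eq_zero_or_inner_pos_of_mem_hull
      (fun γ hγ => hpos γ (h.1.1 hγ.1)) hz).resolve_left hz0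
    rw [real_inner_smul_right] at hz_pos
    nlinarith [hpos α (h.1.1 hα)]

end IsMinimalConeGenerator

end ConeGenerators

section SimpleSystem

variable {E : Type*} [NormedAddCommGroup E] [InnerProductSpace ℝ E]
  {W : Subgroup (E ≃ₗᵢ[ℝ] E)} {v₀ u α : E} {Δ : Set E}

structure IsSimpleSystem (W : Subgroup (E ≃ₗᵢ[ℝ] E)) (v₀ : E) (Δ : Set E) : Prop where
  subset_positiveRoots : Δ ⊆ positiveRoots W v₀
  reflection_apply_mem : ∀ α ∈ Δ, ∀ u ∈ positiveRoots W v₀, u ≠ α →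
    hyperplaneReflection α u ∈ positiveRoots W v₀
  reflection_mem_closure : ∀ u ∈ positiveRoots W v₀,
    hyperplaneReflection u ∈ Subgroup.closure (hyperplaneReflection '' Δ)

namespace IsMinimalConeGenerator

lemma reflection_apply_mem_positiveRoots (hv₀ : ∀ g ∈ W, g ≠ 1 → g v₀ ≠ v₀)
    (hΔ : IsMinimalConeGenerator (positiveRoots W v₀) Δ) (hα : α ∈ Δ)
    (hu : u ∈ positiveRoots W v₀) (hne : u ≠ α) :
    hyperplaneReflection α u ∈ positiveRoots W v₀ := by
  have hpos : ∀ u ∈ positiveRoots W v₀, 0 < ⟪v₀, u⟫ := fun u hu => hu.2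
  obtain ⟨⟨hα1, hαW⟩, hαpos⟩ := hΔ.1.1 hα
  refine (mem_positiveRoots_or_neg_mem hv₀ (apply_mem_rootSet hαW hu.1)).resolve_right
    fun hneg => ?_
  -- With `u = t α + r` and `-s_α u = t' α + r'` for `r, r'` in the cone of `Δ \ {α}`, we get
  -- `(2 ⟪u, α⟫ - t - t') α = r + r' ≠ 0`, which the minimality of `Δ` forbids.
  obtain ⟨t, ht, r, hr, rfl⟩ := exists_eq_smul_add_of_mem_hull hα (hΔ.1.2 hu)
  obtain ⟨t', -, r', hr', hneg_eq⟩ := exists_eq_smul_add_of_mem_hull hα (hΔ.1.2 hneg)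
  have hr0 : r ≠ 0 := by
    rintro rfl
    have ht1 : t = 1 := by
      simpa [norm_smul, hα1, abs_of_nonneg ht] using hu.1.1
    exact hne (by rw [ht1, one_smul, add_zero])
  have hrr' : 0 < ⟪v₀, r + r'⟫ := by
    rw [inner_add_right]
    have hr_pos := (eq_zero_or_inner_pos_of_mem_hull (fun γ hγ => hpos γ (hΔ.1.1 hγ.1)) hr)
    have hr'_nonneg := inner_nonneg_of_mem_hull (fun γ hγ => (hpos γ (hΔ.1.1 hγ.1)).le) hr'
    linarith [hr_pos.resolve_left hr0]
  refine hΔ.smul_ne hpos hα (add_mem hr hr') (by rintro h; simp [h] at hrr')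
    (2 * ⟪t • α + r, α⟫ - t - t') ?_
  rw [hyperplaneReflection_apply hα1] at hneg_eq
  linear_combination (norm := module) hneg_eq

lemma reflection_mem_closure [Finite W] (hv₀ : ∀ g ∈ W, g ≠ 1 → g v₀ ≠ v₀)
    (hΔ : IsMinimalConeGenerator (positiveRoots W v₀) Δ) (hu : u ∈ positiveRoots W v₀) :
    hyperplaneReflection u ∈ Subgroup.closure (hyperplaneReflection '' Δ) := by
  -- Induction on `⟪v₀, u⟫`: reflecting in a simple root `γ` with `⟪u, γ⟫ > 0` lowers it, and
  -- `s_u` is conjugate to `s_{s_γ u}` by `s_γ`.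
  have hwf : (positiveRoots W v₀).WellFoundedOn (Function.onFun (· < ·) fun u => ⟪v₀, u⟫) :=
    Set.wellFoundedOn_image.1 (positiveRoots_finite.image _).wellFoundedOn
  refine hwf.induction (P := fun u => hyperplaneReflection u ∈ Subgroup.closure _) hu
    fun u hu ih => ?_
  by_cases huΔ : u ∈ Δ
  · exact Subgroup.subset_closure ⟨u, huΔ, rfl⟩
  obtain ⟨γ, hγ, hγu⟩ := exists_mem_inner_pos_of_mem_hull (hΔ.1.2 hu)
    (norm_ne_zero_iff.1 (by rw [hu.1.1]; exact one_ne_zero))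
  obtain ⟨⟨hγ1, -⟩, hγpos⟩ := hΔ.1.1 hγ
  have hmem : hyperplaneReflection (hyperplaneReflection γ u) ∈
      Subgroup.closure (hyperplaneReflection '' Δ) := by
    refine ih _ (hΔ.reflection_apply_mem_positiveRoots hv₀ hγ hu fun h => huΔ (h ▸ hγ)) ?_
    show ⟪v₀, hyperplaneReflection γ u⟫ < ⟪v₀, u⟫
    rw [hyperplaneReflection_apply hγ1, inner_sub_right, real_inner_smul_right]
    nlinarith
  have hγmem := Subgroup.subset_closure (k := hyperplaneReflection '' Δ) ⟨γ, hγ, rfl⟩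
  have hconj : hyperplaneReflection u = hyperplaneReflection γ *
      hyperplaneReflection (hyperplaneReflection γ u) * hyperplaneReflection γ := by
    rw [hyperplaneReflection_map, hyperplaneReflection_inv, ← mul_assoc, ← mul_assoc,
      hyperplaneReflection_mul_self, one_mul, mul_assoc, hyperplaneReflection_mul_self, mul_one]
  rw [hconj]
  exact mul_mem (mul_mem hγmem hmem) hγmem

end IsMinimalConeGenerator

lemma exists_isSimpleSystem [Finite W] (hv₀ : ∀ g ∈ W, g ≠ 1 → g v₀ ≠ v₀) :
    ∃ Δ, IsSimpleSystem W v₀ Δ := by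
  obtain ⟨Δ, hΔ⟩ := exists_isMinimalConeGenerator (positiveRoots_finite (W := W) (v₀ := v₀))
  exact ⟨Δ, hΔ.1.1, fun _ hα _ hu hne => hΔ.reflection_apply_mem_positiveRoots hv₀ hα hu hne,
    fun _ hu => hΔ.reflection_mem_closure hv₀ hu⟩

lemma IsSimpleSystem.hyperplaneReflection_mem_closure
    (hΔ : IsSimpleSystem W v₀ Δ) (hv₀ : ∀ g ∈ W, g ≠ 1 → g v₀ ≠ v₀) (hu : u ≠ 0)
    (huW : hyperplaneReflection u ∈ W) :
    hyperplaneReflection u ∈ Subgroup.closure (hyperplaneReflection '' Δ) := by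
  have hsmul := hyperplaneReflection_smul (inv_ne_zero (norm_ne_zero_iff.2 hu)) u
  have hroot : ‖u‖⁻¹ • u ∈ rootSet W := ⟨norm_smul_inv_norm hu, hsmul ▸ huW⟩
  rw [← hsmul]
  rcases mem_positiveRoots_or_neg_mem hv₀ hroot with h | h
  · exact hΔ.reflection_mem_closure _ h
  · rw [← hyperplaneReflection_neg]
    exact hΔ.reflection_mem_closure _ h

end SimpleSystem

section Words

variable {E : Type*} [NormedAddCommGroup E] [InnerProductSpace ℝ E]
  {W : Subgroup (E ≃ₗᵢ[ℝ] E)} {v₀ β : E} {Δ : Set E}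

lemma Subgroup.exists_list_prod_eq_of_inv_subset {G : Type*} [Group G] {S : Set G}
    (hS : S⁻¹ ⊆ S) {g : G} (hg : g ∈ Subgroup.closure S) :
    ∃ l : List G, (∀ x ∈ l, x ∈ S) ∧ l.prod = g := by
  rw [← Subgroup.mem_toSubmonoid, Subgroup.closure_toSubmonoid, Set.union_eq_left.2 hS] at hg
  exact Submonoid.exists_list_of_mem_closure hg

lemma inv_image_hyperplaneReflection_subset :
    (hyperplaneReflection '' Δ)⁻¹ ⊆ hyperplaneReflection '' Δ := by
  rintro x ⟨α, hα, hx⟩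
  exact ⟨α, hα, by rw [← hyperplaneReflection_inv, hx, inv_inv]⟩

/-- The deletion condition of Coxeter theory. -/
lemma IsSimpleSystem.exists_shorter_word (hΔ : IsSimpleSystem W v₀ Δ)
    {l : List (E ≃ₗᵢ[ℝ] E)} (hl : ∀ x ∈ l, x ∈ hyperplaneReflection '' Δ)
    (hβ : β ∈ positiveRoots W v₀) (hlβ : l.prod β ∉ positiveRoots W v₀) :
    ∃ l' : List (E ≃ₗᵢ[ℝ] E), (∀ x ∈ l', x ∈ hyperplaneReflection '' Δ) ∧
      l.prod * hyperplaneReflection β = l'.prod ∧ l'.length < l.length := by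
  induction l with
  | nil => exact absurd hβ hlβ
  | cons x m ih =>
    obtain ⟨c, hc, rfl⟩ := hl x List.mem_cons_self
    have hm : ∀ y ∈ m, y ∈ hyperplaneReflection '' Δ :=
      fun y hy => hl y (List.mem_cons_of_mem _ hy)
    rw [List.prod_cons] at hlβ ⊢
    change hyperplaneReflection c (m.prod β) ∉ positiveRoots W v₀ at hlβ
    by_cases hmβ : m.prod β ∈ positiveRoots W v₀
    · have hc_eq : m.prod β = c := by
        by_contra hne
        exact hlβ (hΔ.reflection_apply_mem c hc _ hmβ hne)
      refine ⟨m, hm, ?_, by simp⟩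
      rw [← hc_eq, hyperplaneReflection_map]
      simp [mul_assoc, hyperplaneReflection_mul_self]
    · obtain ⟨l', hl', heq, hlen⟩ := ih hm hmβ
      refine ⟨hyperplaneReflection c :: l', ?_, by rw [List.prod_cons, mul_assoc, heq], by simpa⟩
      exact List.forall_mem_cons.2 ⟨⟨c, hc, rfl⟩, hl'⟩

end Words

section Chamber

variable {E : Type*} [NormedAddCommGroup E] [InnerProductSpace ℝ E]
  {W : Subgroup (E ≃ₗᵢ[ℝ] E)} {v₀ x y : E} {Δ : Set E}

def closedChamber (W : Subgroup (E ≃ₗᵢ[ℝ] E)) (v₀ : E) : Set E :=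
  {x | ∀ u ∈ positiveRoots W v₀, 0 ≤ ⟪x, u⟫}

lemma IsSimpleSystem.eq_of_list_prod_apply_eq (hΔ : IsSimpleSystem W v₀ Δ)
    {l : List (E ≃ₗᵢ[ℝ] E)} (hl : ∀ g ∈ l, g ∈ hyperplaneReflection '' Δ)
    (hx : x ∈ closedChamber W v₀) (hy : y ∈ closedChamber W v₀) (h : l.prod x = y) : y = x := by
  induction hlen : l.length using Nat.strong_induction_on generalizing l with
  | _ k ih =>
  rcases l.eq_nil_or_concat' with rfl | ⟨m, g, rfl⟩
  · exact h.symm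
  obtain ⟨α, hα, rfl⟩ := hl g (by simp)
  have hm : ∀ g ∈ m, g ∈ hyperplaneReflection '' Δ := fun g hg => hl g (by simp [hg])
  have hmlen : m.length < k := by simp at hlen; omega
  have hαP := hΔ.subset_positiveRoots hα
  rw [List.prod_append, List.prod_singleton] at h
  change m.prod (hyperplaneReflection α x) = y at h
  by_cases hmα : m.prod α ∈ positiveRoots W v₀
  · have hxy : ⟪y, m.prod α⟫ = -⟪x, α⟫ := by
      rw [← h, LinearIsometryEquiv.inner_map_map, ← LinearIsometryEquiv.inner_map_map
        (hyperplaneReflection α), hyperplaneReflection_hyperplaneReflection,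
        hyperplaneReflection_self, inner_neg_right]
    have hfix : hyperplaneReflection α x = x := hyperplaneReflection_eq_self_of_inner_eq_zero
      (by linarith [hx α hαP, hy _ hmα])
    exact ih _ hmlen hm (by rw [← hfix]; exact h) rfl
  · obtain ⟨l', hl', heq, hlen'⟩ := hΔ.exists_shorter_word hm hαP hmα
    exact ih _ (by omega) hl' (by rw [← heq]; exact h) rfl

end Chamber

section Euclidean

variable {n : ℕ}

lemma exists_eq_hyperplaneReflection_of_isReflection {g : Orth n} (hg : IsReflection g) :
    ∃ u : Euc n, u ≠ 0 ∧ g = hyperplaneReflection u := by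
  have hfix : fixedSubspace g =
      (ContinuousLinearMap.id ℝ (Euc n) - g.toContinuousLinearEquiv).ker := by
    ext x
    change g x - x = 0 ↔ x - g x = 0
    rw [sub_eq_zero, sub_eq_zero, eq_comm]
  have hg1 : g ≠ 1 := by
    rintro rfl
    have : fixedSubspace (1 : Orth n) = ⊤ := by ext; simp [fixedSubspace]
    rw [IsReflection, this, finrank_top, finrank_euclideanSpace_fin] at hg
    omega
  have hdim : Module.finrank ℝ (fixedSubspace g)ᗮ ≤ 1 := by
    have := Submodule.finrank_add_finrank_orthogonal (fixedSubspace g)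
    rw [finrank_euclideanSpace_fin] at this
    unfold IsReflection at hg
    omega
  rw [hfix] at hdim
  obtain ⟨l, hl, rfl⟩ := LinearIsometryEquiv.reflections_generate_dim_aux g hdim
  match l, hl with
  | [], _ => exact absurd List.prod_nil hg1
  | [u], _ =>
    refine ⟨u, ?_, by simp [hyperplaneReflection]⟩
    rintro rfl
    exact hg1 (by simpa [hyperplaneReflection] using hyperplaneReflection_zero)

variable {W : Subgroup (Orth n)} {v₀ : Euc n}

lemma IsSimpleSystem.le_closure
    (hgen : Subgroup.closure {g : Orth n | g ∈ W ∧ IsReflection g} = W)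
    (hv₀ : ∀ g ∈ W, g ≠ 1 → g v₀ ≠ v₀) {Δ : Set (Euc n)} (hΔ : IsSimpleSystem W v₀ Δ) :
    W ≤ Subgroup.closure (hyperplaneReflection '' Δ) := by
  rw [← hgen, Subgroup.closure_le]
  rintro g ⟨hgW, hg⟩
  obtain ⟨u, hu, rfl⟩ := exists_eq_hyperplaneReflection_of_isReflection hg
  exact hΔ.hyperplaneReflection_mem_closure hv₀ hu hgW

lemma mem_dirichletDomain_iff {x : Euc n} :
    x ∈ dirichletDomain n W v₀ ↔ ∀ g ∈ W, ⟪x, g v₀⟫ ≤ ⟪x, v₀⟫ := by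
  simp only [dirichletDomain, Set.mem_iInter]
  rfl

lemma dirichletDomain_subset_closedChamber : dirichletDomain n W v₀ ⊆ closedChamber W v₀ := by
  rintro x hx u ⟨⟨hu, huW⟩, hpos⟩
  have := mem_dirichletDomain_iff.1 hx _ huW
  rw [hyperplaneReflection_apply hu, inner_sub_right, real_inner_smul_right] at this
  nlinarith

lemma isClosed_dirichletDomain : IsClosed (dirichletDomain n W v₀) :=
  isClosed_biInter fun _ _ =>
    isClosed_le (continuous_id.inner continuous_const) (continuous_id.inner continuous_const)

lemma exists_smul_mem_dirichletDomain [Finite W] (v : Euc n) :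
    ∃ g : W, g • v ∈ dirichletDomain n W v₀ := by
  obtain ⟨g, hg⟩ := Finite.exists_max fun g : W => ⟪(g : Orth n) v, v₀⟫
  refine ⟨g, mem_dirichletDomain_iff.2 fun h hh => ?_⟩
  have hinv : ((⟨h, hh⟩⁻¹ * g : W) : Orth n) v = h⁻¹ ((g : Orth n) v) := rfl
  calc ⟪(g : Orth n) v, h v₀⟫ = ⟪h⁻¹ ((g : Orth n) v), h⁻¹ (h v₀)⟫ :=
        (h⁻¹.inner_map_map _ _).symm
    _ = ⟪((⟨h, hh⟩⁻¹ * g : W) : Orth n) v, v₀⟫ := by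
        rw [hinv]
        congr 1
        exact inv_smul_smul h v₀
    _ ≤ ⟪(g : Orth n) v, v₀⟫ := hg _

lemma smul_eq_self_of_mem_dirichletDomain [Finite W]
    (hgen : Subgroup.closure {g : Orth n | g ∈ W ∧ IsReflection g} = W)
    (hv₀ : ∀ g ∈ W, g ≠ 1 → g v₀ ≠ v₀) {x : Euc n} (hx : x ∈ dirichletDomain n W v₀) (g : W)
    (hgx : g • x ∈ dirichletDomain n W v₀) : g • x = x := by
  obtain ⟨Δ, hΔ⟩ := exists_isSimpleSystem hv₀
  obtain ⟨l, hl, hprod⟩ := Subgroup.exists_list_prod_eq_of_inv_subset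
    inv_image_hyperplaneReflection_subset (hΔ.le_closure hgen hv₀ g.2)
  exact hΔ.eq_of_list_prod_apply_eq hl (dirichletDomain_subset_closedChamber hx)
    (dirichletDomain_subset_closedChamber hgx) (by rw [hprod]; rfl)

end Euclidean

section OrbitSpace

instance {n : ℕ} : ContinuousConstSMul (Orth n) (Euc n) := ⟨fun g => g.continuous⟩

instance {G X : Type*} [Group G] [TopologicalSpace X] [MulAction G X] [ContinuousConstSMul G X]
    (H : Subgroup G) : ContinuousConstSMul H X :=
  ⟨fun h => continuous_const_smul (h : G)⟩

theorem isHomeomorph_restrict_quotient_mk {G X : Type*} [Group G] [Finite G] [TopologicalSpace X]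
    [MulAction G X] [ContinuousConstSMul G X] {C : Set X} (hC : IsClosed C)
    (hmeets : ∀ x, ∃ g : G, g • x ∈ C) (hunique : ∀ x ∈ C, ∀ g : G, g • x ∈ C → g • x = x) :
    IsHomeomorph fun c : C => Quotient.mk (MulAction.orbitRel G X) (c : X) := by
  let _ := MulAction.orbitRel G X
  rw [isHomeomorph_iff_continuous_isClosedMap_bijective]
  refine ⟨continuous_quotient_mk'.comp continuous_subtype_val, fun D hD => ?_, fun a b hab => ?_,
    fun q => ?_⟩
  · have hD' := hC.isClosedEmbedding_subtypeVal.isClosedMap D hD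
    rw [show (fun c : C => Quotient.mk _ (c : X)) '' D = Quotient.mk' '' (Subtype.val '' D) from
      (Set.image_image _ _ _).symm, ← isQuotientMap_quotient_mk'.isClosed_preimage,
      MulAction.quotient_preimage_image_eq_union_mul]
    exact isClosed_iUnion_of_finite fun g => (Homeomorph.smul g).isClosedMap _ hD'
  · obtain ⟨g, hg⟩ := Quotient.exact hab
    have hga : g • (b : X) ∈ C := by
      change g • (b : X) = a at hg
      exact hg ▸ a.2
    exact Subtype.ext (hg.symm.trans (hunique b b.2 g hga))
  · induction q using Quotient.ind with
    | _ x =>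
    obtain ⟨g, hg⟩ := hmeets x
    exact ⟨⟨g • x, hg⟩, Quotient.sound ⟨g, rfl⟩⟩

end OrbitSpace

/-- For a finite reflection group `W ≤ O(n)` and a point `v₀` not fixed by any
nontrivial element of `W`, every `W`-orbit meets the Dirichlet domain `Λ` in exactly
one point, and the restriction of the quotient map `ℝⁿ → ℝⁿ/W` to `Λ` is a
homeomorphism onto `ℝⁿ/W`. -/
theorem stmt_11 (n : ℕ) (W : Subgroup (Orth n)) [Finite W]
    (hgen : Subgroup.closure {g : Orth n | g ∈ W ∧ IsReflection g} = W)
    (v₀ : Euc n) (hv₀ : ∀ g ∈ W, g ≠ 1 → g • v₀ ≠ v₀) :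
    (∀ v : Euc n, ∃! w : Euc n, w ∈ dirichletDomain n W v₀ ∧ ∃ g ∈ W, g • v = w) ∧
    IsHomeomorph (fun w : dirichletDomain n W v₀ =>
      Quotient.mk (MulAction.orbitRel W (Euc n)) (w : Euc n)) := by
  have hmeets : ∀ v : Euc n, ∃ g : W, g • v ∈ dirichletDomain n W v₀ :=
    exists_smul_mem_dirichletDomain
  have hunique : ∀ x ∈ dirichletDomain n W v₀, ∀ g : W, g • x ∈ dirichletDomain n W v₀ →
      g • x = x := fun _ hx => smul_eq_self_of_mem_dirichletDomain hgen hv₀ hx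
  refine ⟨fun v => ?_, isHomeomorph_restrict_quotient_mk isClosed_dirichletDomain hmeets hunique⟩
  obtain ⟨g, hg⟩ := hmeets v
  refine ⟨g • v, ⟨hg, g, g.2, rfl⟩, ?_⟩
  rintro _ ⟨hw, h, hh, rfl⟩
  have hk := hunique _ hg (⟨h, hh⟩ * g⁻¹) (by rwa [mul_smul, inv_smul_smul])
  rwa [mul_smul, inv_smul_smul] at hk
end
end

section
/- Let K and K̃ be finite abstract simplicial complexes and let p be a simplicial surjection from K onto K̃ that maps every simplex of K bijectively (injectively on vertices) onto a simplex of K̃. Let L be a subcomplex of K such that p restricts to a bijection from the set of simplices of K not in L onto the set of simplices of K̃ not in p(L). If K collapses onto L, then K̃ collapses onto p(L). -/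
/-- A finite abstract simplicial complex, encoded as a finite set of simplices:
every simplex is nonempty and every nonempty subset of a simplex is a simplex. -/
def IsComplex {V : Type*} (K : Finset (Finset V)) : Prop :=
  (∀ s ∈ K, s.Nonempty) ∧ ∀ s ∈ K, ∀ t ⊆ s, t.Nonempty → t ∈ K

/-- `σ` is a maximal simplex of `K`: it belongs to `K` and is not a proper subset of
another simplex of `K`. -/
def IsMaximalFace {V : Type*} (K : Finset (Finset V)) (σ : Finset V) : Prop :=
  σ ∈ K ∧ ∀ ρ ∈ K, ¬ σ ⊂ ρ

/-- An elementary collapse from `K` to `K'`: there is a free face `τ` of `K`, i.e.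
a simplex `τ` that is a proper face of exactly one maximal simplex `σ`, and `K'` is
obtained from `K` by removing all simplices `ρ` with `τ ⊆ ρ ⊆ σ`. -/
def ElemCollapse {V : Type*} (K K' : Finset (Finset V)) : Prop :=
  ∃ τ σ : Finset V, τ ∈ K ∧ σ ∈ K ∧ τ ⊂ σ ∧ IsMaximalFace K σ ∧
    (∀ σ' : Finset V, IsMaximalFace K σ' → τ ⊂ σ' → σ' = σ) ∧
    ∀ ρ : Finset V, ρ ∈ K' ↔ ρ ∈ K ∧ ¬(τ ⊆ ρ ∧ ρ ⊆ σ)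

/-- `K` collapses onto `L`: there is a finite sequence of elementary collapses
leading from `K` to `L`. -/
def CollapsesOnto {V : Type*} (K L : Finset (Finset V)) : Prop :=
  Relation.ReflTransGen ElemCollapse K L

lemma elemCollapse_subset {V : Type*} {K K' : Finset (Finset V)}
    (h : ElemCollapse K K') : K' ⊆ K := by
  obtain ⟨τ, σ, -, -, -, -, -, hiff⟩ := h
  exact fun ρ hρ => ((hiff ρ).1 hρ).1

lemma collapsesOnto_subset {V : Type*} {K L : Finset (Finset V)}
    (h : CollapsesOnto K L) : L ⊆ K := by
  induction h with
  | refl => exact Finset.Subset.refl _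
  | tail hstep h ih => exact (elemCollapse_subset h).trans ih

/-- Let `p` be a simplicial surjection between finite simplicial complexes `K` and
`K'` mapping every simplex of `K` bijectively onto a simplex of `K'`, and let `L` be
a subcomplex of `K` such that `p` restricts to a bijection from the simplices of `K`
not in `L` onto the simplices of `K'` not in `p(L)`. If `K` collapses onto `L`,
then `K'` collapses onto `p(L)`. -/
theorem stmt_15 {V W : Type*} [DecidableEq V] [DecidableEq W]
    (K L : Finset (Finset V)) (K' : Finset (Finset W)) (p : V → W)
    (hK : IsComplex K) (hK' : IsComplex K')
    (hsimp : ∀ s ∈ K, s.image p ∈ K')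
    (hinj : ∀ s ∈ K, Set.InjOn p (s : Set V))
    (hsurj : ∀ t ∈ K', ∃ s ∈ K, s.image p = t)
    (hL : IsComplex L) (hLK : L ⊆ K)
    (hbij : Set.BijOn (fun s : Finset V => s.image p)
      ((K : Set (Finset V)) \ (L : Set (Finset V)))
      ((K' : Set (Finset W)) \ ((L.image (fun s => s.image p)) : Set (Finset W))))
    (hcol : CollapsesOnto K L) :
    CollapsesOnto K' (L.image (fun s => s.image p)) := by
  classical
  set f : Finset V → Finset W := fun s => s.image p with hf
  -- p(L) avoidance
  have notLf : ∀ u ∈ K, u ∉ L → f u ∉ L.image f := by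
    intro u hu huL hmem
    have h := hbij.mapsTo (show u ∈ (K : Set (Finset V)) \ (L : Set (Finset V)) from
      ⟨Finset.mem_coe.2 hu, fun h => huL (Finset.mem_coe.1 h)⟩)
    exact h.2 (Finset.mem_coe.2 hmem)
  -- cardinalities
  have cardEq : ∀ s t : Finset V, t ∈ K → s ⊆ t → (f s).card = s.card := by
    intro s t ht hst
    exact Finset.card_image_of_injOn ((hinj t ht).mono (Finset.coe_subset.2 hst))
  have strictMap : ∀ s t : Finset V, t ∈ K → s ⊂ t → f s ⊂ f t := by
    intro s t ht hst
    refine (Finset.image_subset_image hst.subset).ssubset_of_ne ?_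
    intro heq
    have h0 : (f s).card = (f t).card := congrArg Finset.card heq
    have h1 : (f s).card = s.card := cardEq s t ht hst.subset
    have h2 : (f t).card = t.card := cardEq t t ht (Finset.Subset.refl _)
    rw [h1, h2] at h0
    exact absurd h0 (Finset.card_lt_card hst).ne
  -- Lemma A: pulling back inclusions
  have lemA : ∀ ρ ∈ K, ∀ u ∈ K, u ∉ L → f u ⊆ f ρ → u ⊆ ρ := by
    intro ρ hρ u hu huL hsub
    set s := ρ.filter (fun v => p v ∈ u.image p) with hs
    have hsρ : s ⊆ ρ := Finset.filter_subset _ _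
    have himg : f s = f u := by
      apply Finset.Subset.antisymm
      · intro w hw
        simp only [hf, Finset.mem_image] at hw
        obtain ⟨v, hv, rfl⟩ := hw
        exact (Finset.mem_filter.1 hv).2
      · intro w hw
        have hwρ : w ∈ ρ.image p := hsub hw
        simp only [hf, Finset.mem_image] at hwρ ⊢
        obtain ⟨v, hv, rfl⟩ := hwρ
        exact ⟨v, Finset.mem_filter.2 ⟨hv, hw⟩, rfl⟩
    have hsne : s.Nonempty := by
      have hune : (f u).Nonempty := (hK.1 u hu).image p
      rw [← himg] at hune
      exact Finset.image_nonempty.1 hune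
    have hsK : s ∈ K := hK.2 ρ hρ s hsρ hsne
    have hsL : s ∉ L := by
      intro h
      exact notLf u hu huL (himg ▸ Finset.mem_image_of_mem f h)
    have : s = u := hbij.injOn
      ⟨Finset.mem_coe.2 hsK, fun h => hsL (Finset.mem_coe.1 h)⟩
      ⟨Finset.mem_coe.2 hu, fun h => huL (Finset.mem_coe.1 h)⟩ himg
    exact this ▸ hsρ
  -- Lemma C: p(L) is closed under nonempty faces
  have lemC : ∀ t ∈ L.image f, ∀ t' ⊆ t, t'.Nonempty → t' ∈ L.image f := by
    intro t ht t' hsub hne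
    obtain ⟨l, hl, rfl⟩ := Finset.mem_image.1 ht
    set s := l.filter (fun v => p v ∈ t') with hs
    have hsl : s ⊆ l := Finset.filter_subset _ _
    have himg : f s = t' := by
      apply Finset.Subset.antisymm
      · intro w hw
        simp only [hf, Finset.mem_image] at hw
        obtain ⟨v, hv, rfl⟩ := hw
        exact (Finset.mem_filter.1 hv).2
      · intro w hw
        have hwl : w ∈ l.image p := hsub hw
        simp only [hf, Finset.mem_image] at hwl ⊢
        obtain ⟨v, hv, rfl⟩ := hwl
        exact ⟨v, Finset.mem_filter.2 ⟨hv, hw⟩, rfl⟩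
    have hsne : s.Nonempty := by
      rw [← himg] at hne
      exact Finset.image_nonempty.1 hne
    have : s ∈ L := hL.2 l hl s hsl hsne
    exact himg ▸ Finset.mem_image_of_mem f this
  -- K' is the image of K
  have hK'eq : K' = K.image f := by
    apply Finset.Subset.antisymm
    · intro t ht
      obtain ⟨s, hs, rfl⟩ := hsurj t ht
      exact Finset.mem_image_of_mem f hs
    · intro t ht
      obtain ⟨s, hs, rfl⟩ := Finset.mem_image.1 ht
      exact hsimp s hs
  rw [hK'eq]
  -- main induction
  have main : ∀ M : Finset (Finset V), CollapsesOnto M L → M ⊆ K →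
      CollapsesOnto (M.image f) (L.image f) := by
    intro M hM
    induction hM using Relation.ReflTransGen.head_induction_on with
    | refl => intro _; exact Relation.ReflTransGen.refl
    | @head M M₁ hstep hrest ih =>
      intro hMK
      obtain ⟨τ, σ, hτM, hσM, hτσ, hmaxσ, huniq, hiff⟩ := hstep
      have hM₁M : M₁ ⊆ M := by
        intro ρ hρ; exact ((hiff ρ).1 hρ).1
      have hM₁K : M₁ ⊆ K := hM₁M.trans hMK
      have hLM₁ : L ⊆ M₁ := collapsesOnto_subset hrest
      have hτK : τ ∈ K := hMK hτM
      have hσK : σ ∈ K := hMK hσM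
      have hτL : τ ∉ L := by
        intro h
        have : τ ∈ M₁ := hLM₁ h
        exact ((hiff τ).1 this).2 ⟨Finset.Subset.refl _, hτσ.subset⟩
      have hσL : σ ∉ L := by
        intro h
        have : σ ∈ M₁ := hLM₁ h
        exact ((hiff σ).1 this).2 ⟨hτσ.subset, Finset.Subset.refl _⟩
      have hfτL : f τ ∉ L.image f := notLf τ hτK hτL
      have hfσL : f σ ∉ L.image f := notLf σ hσK hσL
      have hfτne : (f τ).Nonempty := (hK.1 τ hτK).image p
      -- the image free pair
      have hfτσ : f τ ⊂ f σ := strictMap τ σ hσK hτσ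
      -- maximality of f σ in image
      have hmax' : IsMaximalFace (M.image f) (f σ) := by
        refine ⟨Finset.mem_image_of_mem f hσM, ?_⟩
        intro ρ' hρ' hss
        obtain ⟨ρ, hρ, rfl⟩ := Finset.mem_image.1 hρ'
        have hρK : ρ ∈ K := hMK hρ
        have hfρL : f ρ ∉ L.image f := by
          intro h
          exact hfσL (lemC (f ρ) h (f σ) hss.subset ((hK.1 σ hσK).image p))
        have hρL : ρ ∉ L := fun h => hfρL (Finset.mem_image_of_mem f h)
        have hσρ : σ ⊆ ρ := lemA ρ hρK σ hσK hσL hss.subset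
        have : σ ⊂ ρ := by
          refine hσρ.ssubset_of_ne ?_
          rintro rfl
          exact hss.ne rfl
        exact hmaxσ.2 ρ hρ this
      -- uniqueness
      have huniq' : ∀ σ'' : Finset W, IsMaximalFace (M.image f) σ'' → f τ ⊂ σ'' → σ'' = f σ := by
        intro σ'' hmax'' hss
        obtain ⟨ρ, hρ, rfl⟩ := Finset.mem_image.1 hmax''.1
        have hρK : ρ ∈ K := hMK hρ
        have hfρL : f ρ ∉ L.image f := by
          intro h
          exact hfτL (lemC (f ρ) h (f τ) hss.subset hfτne)
        have hρL : ρ ∉ L := fun h => hfρL (Finset.mem_image_of_mem f h)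
        have hτρ : τ ⊆ ρ := lemA ρ hρK τ hτK hτL hss.subset
        have hτρ' : τ ⊂ ρ := by
          refine hτρ.ssubset_of_ne ?_
          rintro rfl
          exact hss.ne rfl
        have hρmax : IsMaximalFace M ρ := by
          refine ⟨hρ, ?_⟩
          intro ρ₂ hρ₂ hs2
          exact hmax''.2 (f ρ₂) (Finset.mem_image_of_mem f hρ₂)
            (strictMap ρ ρ₂ (hMK hρ₂) hs2)
        rw [huniq ρ hρmax hτρ']
      -- the removal equation
      have hiff' : ∀ ρ' : Finset W, ρ' ∈ M₁.image f ↔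
          ρ' ∈ M.image f ∧ ¬(f τ ⊆ ρ' ∧ ρ' ⊆ f σ) := by
        intro ρ'
        constructor
        · intro h
          obtain ⟨ρ, hρ, rfl⟩ := Finset.mem_image.1 h
          refine ⟨Finset.mem_image_of_mem f (hM₁M hρ), ?_⟩
          rintro ⟨h1, h2⟩
          have hρK : ρ ∈ K := hM₁K hρ
          have hfρL : f ρ ∉ L.image f := by
            intro hm
            exact hfτL (lemC (f ρ) hm (f τ) h1 hfτne)
          have hρL : ρ ∉ L := fun hm => hfρL (Finset.mem_image_of_mem f hm)
          have hτρ : τ ⊆ ρ := lemA ρ hρK τ hτK hτL h1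
          have hρσ : ρ ⊆ σ := lemA σ hσK ρ hρK hρL h2
          exact ((hiff ρ).1 hρ).2 ⟨hτρ, hρσ⟩
        · rintro ⟨h, hnot⟩
          obtain ⟨ρ, hρ, rfl⟩ := Finset.mem_image.1 h
          have : ρ ∈ M₁ := by
            rw [hiff ρ]
            refine ⟨hρ, ?_⟩
            rintro ⟨h1, h2⟩
            exact hnot ⟨Finset.image_subset_image h1, Finset.image_subset_image h2⟩
          exact Finset.mem_image_of_mem f this
      have hstep' : ElemCollapse (M.image f) (M₁.image f) :=
        ⟨f τ, f σ, Finset.mem_image_of_mem f hτM, Finset.mem_image_of_mem f hσM,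
          hfτσ, hmax', huniq', hiff'⟩
      exact Relation.ReflTransGen.head hstep' (ih hM₁K)
  exact main K hcol (Finset.Subset.refl K)
end

section
/- Let n ≥ 1 and let D⁺(n) ≤ SO(n) be the group of all diagonal orthogonal matrices diag(ε₁, …, ε_n) with ε_i ∈ {±1} and ε₁⋯ε_n = 1 (the group of even sign changes). Then the orbit space S^{n−1}/D⁺(n), equipped with the quotient topology, is homeomorphic to S^{n−1}. -/
open Metric

noncomputable section

/-!
The invariants of the even sign changes on `S^{n-1}` are the squares `yᵢ = xᵢ²`, a point of the
standard simplex, and the product `∏ xᵢ`, which `y` determines up to sign and which vanishes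
exactly over the boundary of the simplex. So the orbit space is two copies of the simplex glued
along their boundaries. Recentre the simplex at its barycentre, inside the hyperplane
`∑ vᵢ = 0`, and rescale it radially by its gauge `γ` onto the unit ball of that hyperplane; the
sign of the product then chooses the hemisphere over that ball:
`x ↦ R(x² - 1/n) ± √(1 - γ²) · (1, …, 1)/√n`.
This continuous surjection of the compact sphere onto itself has the orbits as its fibres.
-/

open Finset

lemma nonempty_quotient_homeomorph_of_eq_ker {X Y : Type*} [TopologicalSpace X] [CompactSpace X]
    [TopologicalSpace Y] [T2Space Y] {s : Setoid X} (f : C(X, Y))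
    (hf : Function.Surjective f) (hs : s = Setoid.ker f) : Nonempty (Quotient s ≃ₜ Y) := by
  subst hs
  exact ⟨(Topology.IsQuotientMap.of_surjective_continuous hf f.continuous).homeomorph⟩

lemma eq_of_sq_eq_sq_of_nonneg_iff {a b : ℝ} (h : a ^ 2 = b ^ 2) (hs : 0 ≤ a ↔ 0 ≤ b) :
    a = b := by
  rcases sq_eq_sq_iff_eq_or_eq_neg.1 h with h | rfl
  · exact h
  · obtain rfl : b = 0 := by
      rcases le_total 0 b with hb | hb
      · linarith [hs.2 hb]
      · linarith [hs.1 (by linarith)]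
    simp

section SignChanges

variable {ι : Type*} [Fintype ι]

lemma exists_signs_of_sq_eq_of_prod_eq [DecidableEq ι] {x x' : ι → ℝ}
    (hsq : ∀ i, x' i ^ 2 = x i ^ 2) (hprod : ∏ i, x' i = ∏ i, x i) :
    ∃ ε : ι → ℝ, (∀ i, ε i = 1 ∨ ε i = -1) ∧ ∏ i, ε i = 1 ∧ ∀ i, x' i = ε i * x i := by
  set ε₀ : ι → ℝ := fun i => if x' i = x i then 1 else -1
  have hε₀ : ∀ i, ε₀ i = 1 ∨ ε₀ i = -1 := fun i => by
    by_cases h : x' i = x i <;> simp [ε₀, h]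
  have hx' : ∀ i, x' i = ε₀ i * x i := fun i => by
    by_cases h : x' i = x i
    · simp [ε₀, h]
    · simp [ε₀, (sq_eq_sq_iff_eq_or_eq_neg.1 (hsq i)).resolve_left h]
  by_cases h0 : ∏ i, x i = 0
  · -- `ε₀` may have the wrong parity; fix it at a coordinate where `x` vanishes.
    obtain ⟨j, -, hj⟩ := prod_eq_zero_iff.1 h0
    have hP : ∏ i, ε₀ i = 1 ∨ ∏ i, ε₀ i = -1 := by
      rw [← sq_eq_one_iff, ← prod_pow]
      exact prod_eq_one fun i _ => by rcases hε₀ i with h | h <;> simp [h]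
    refine ⟨fun i => ε₀ i * (Pi.mulSingle j (∏ i, ε₀ i) : ι → ℝ) i, fun i => ?_, ?_, fun i => ?_⟩
    · by_cases hi : i = j
      · subst hi; rcases hε₀ i with h | h <;> rcases hP with hP | hP <;> simp [h, hP]
      · simpa [Pi.mulSingle_eq_of_ne hi] using hε₀ i
    · rw [prod_mul_distrib, prod_pi_mulSingle']
      rcases hP with hP | hP <;> rw [hP] <;> norm_num
    · by_cases hi : i = j
      · subst hi; simp [hj, hx' i]
      · simp [Pi.mulSingle_eq_of_ne hi, hx' i]
  · refine ⟨ε₀, hε₀, ?_, hx'⟩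
    have hprod' : (∏ i, ε₀ i) * ∏ i, x i = ∏ i, x i := by
      rw [← prod_mul_distrib, ← hprod]
      exact prod_congr rfl fun i _ => (hx' i).symm
    simpa [h0] using hprod'

lemma exists_sq_eq_and_prod_nonneg_iff [DecidableEq ι] [Nonempty ι] {y : ι → ℝ}
    (hy : ∀ i, 0 ≤ y i) {t : ℝ} (ht : t < 0 → ∀ i, 0 < y i) :
    ∃ x : ι → ℝ, (∀ i, x i ^ 2 = y i) ∧ (0 ≤ ∏ i, x i ↔ 0 ≤ t) := by
  rcases le_or_gt 0 t with ht0 | ht0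
  · exact ⟨fun i => √(y i), fun i => Real.sq_sqrt (hy i),
      iff_of_true (prod_nonneg fun i _ => Real.sqrt_nonneg _) ht0⟩
  · obtain ⟨j⟩ := ‹Nonempty ι›
    refine ⟨fun i => (Pi.mulSingle j (-1) : ι → ℝ) i * √(y i), fun i => ?_, ?_⟩
    · by_cases hi : i = j
      · subst hi; simp [Real.sq_sqrt (hy i)]
      · simp [Pi.mulSingle_eq_of_ne hi, Real.sq_sqrt (hy i)]
    · have : 0 < ∏ i, √(y i) := prod_pos fun i _ => Real.sqrt_pos.2 (ht ht0 i)
      rw [prod_mul_distrib, prod_pi_mulSingle', if_pos (mem_univ j)]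
      constructor <;> intro <;> linarith

def signChange (ε : ι → ℝ) : EuclideanSpace ℝ ι ≃ₗᵢ[ℝ] EuclideanSpace ℝ ι :=
  LinearIsometryEquiv.piLpCongrRight 2 fun i =>
    if ε i = 1 then LinearIsometryEquiv.refl ℝ ℝ else LinearIsometryEquiv.neg ℝ

lemma signChange_apply {ε : ι → ℝ} (hε : ∀ i, ε i = 1 ∨ ε i = -1)
    (x : EuclideanSpace ℝ ι) (i : ι) : signChange ε x i = ε i * x i := by
  rcases hε i with h | h <;> norm_num [signChange, h]

end SignChanges

variable {n : ℕ}

lemma orbitRel_sphere_iff {D : Subgroup (Orth n)}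
    (hD : ∀ g : Orth n, g ∈ D ↔ ∃ ε : Fin n → ℝ,
      (∀ i, ε i = 1 ∨ ε i = -1) ∧ (∏ i, ε i) = 1 ∧ ∀ (x : Euc n) (i : Fin n), g x i = ε i * x i)
    {x x' : sphere (0 : Euc n) 1} :
    MulAction.orbitRel D (sphere (0 : Euc n) 1) x' x ↔
      (∀ i, (x' : Euc n) i ^ 2 = (x : Euc n) i ^ 2) ∧
        ∏ i, (x' : Euc n) i = ∏ i, (x : Euc n) i := by
  rw [MulAction.orbitRel_apply, MulAction.mem_orbit_iff]
  constructor
  · rintro ⟨⟨g, hg⟩, rfl⟩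
    obtain ⟨ε, hε, hε1, hgε⟩ := (hD g).1 hg
    change (∀ i, g x i ^ 2 = _) ∧ ∏ i, g x i = _
    refine ⟨fun i => ?_, ?_⟩
    · rcases hε i with h | h <;> simp [hgε, h]
    · simp [hgε, prod_mul_distrib, hε1]
  · rintro ⟨hsq, hprod⟩
    obtain ⟨ε, hε, hε1, hx'⟩ := exists_signs_of_sq_eq_of_prod_eq hsq hprod
    exact ⟨⟨signChange ε, (hD _).2 ⟨ε, hε, hε1, signChange_apply hε⟩⟩,
      Subtype.ext <| PiLp.ext fun i => (signChange_apply hε _ i).trans (hx' i).symm⟩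

lemma sum_smul_apply (c : ℝ) (v : Euc n) : ∑ i, (c • v) i = c * ∑ i, v i := by
  simp [mul_sum]

lemma sum_sq_eq_one_iff_norm_eq_one {x : Euc n} : ∑ i, x i ^ 2 = 1 ↔ ‖x‖ = 1 := by
  rw [← EuclideanSpace.real_norm_sq_eq, pow_eq_one_iff_of_nonneg (norm_nonneg x) two_ne_zero]

lemma sum_add_const_sq {b : Euc n} (hb : ∑ i, b i = 0) (c : ℝ) :
    ∑ i, (b i + c) ^ 2 = ‖b‖ ^ 2 + n * c ^ 2 := by
  simp only [add_sq, sum_add_distrib, ← sum_mul, ← mul_sum, hb, EuclideanSpace.real_norm_sq_eq]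
  simp

def centeredSquares (x : Euc n) : Euc n := WithLp.toLp 2 fun i => x i ^ 2 - 1 / n

@[simp]
lemma centeredSquares_apply (x : Euc n) (i : Fin n) : centeredSquares x i = x i ^ 2 - 1 / n :=
  rfl

lemma continuous_centeredSquares : Continuous (centeredSquares : Euc n → Euc n) :=
  (PiLp.continuous_toLp 2 _).comp
    (continuous_pi fun i => ((PiLp.continuous_apply 2 _ i).pow 2).sub continuous_const)

variable [NeZero n]

/-- The gauge of the standard simplex recentred at its barycentre: on the hyperplane
`∑ vᵢ = 0`, `simplexGauge v ≤ 1` iff `vᵢ + 1/n ≥ 0` for all `i`. -/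
def simplexGauge (v : Euc n) : ℝ :=
  univ.sup' univ_nonempty fun i => -(n * v i)

lemma le_simplexGauge (v : Euc n) (i : Fin n) : -(n * v i) ≤ simplexGauge v :=
  le_sup' (fun i => -(n * v i)) (mem_univ i)

lemma simplexGauge_le_iff {v : Euc n} {c : ℝ} :
    simplexGauge v ≤ c ↔ ∀ i, -(n * v i) ≤ c := by
  simp [simplexGauge]

lemma simplexGauge_smul {t : ℝ} (ht : 0 ≤ t) (v : Euc n) :
    simplexGauge (t • v) = t * simplexGauge v := by
  rw [simplexGauge, simplexGauge, apply_sup'_eq_sup'_comp _ _ fun a b => mul_max_of_nonneg a b ht]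
  congr 1
  ext i
  simp only [Function.comp_apply, PiLp.smul_apply, smul_eq_mul]
  ring

lemma simplexGauge_zero : simplexGauge (0 : Euc n) = 0 := by
  simpa using simplexGauge_smul le_rfl (0 : Euc n)

lemma simplexGauge_nonneg {v : Euc n} (hv : ∑ i, v i = 0) : 0 ≤ simplexGauge v := by
  obtain ⟨i, -, hi⟩ :=
    exists_le_of_sum_le (f := fun i => v i) (g := fun _ => 0) univ_nonempty (by simp [hv])
  have := le_simplexGauge v i
  nlinarith [(Nat.cast_pos.2 (NeZero.pos n) : (0 : ℝ) < n)]

lemma simplexGauge_pos {v : Euc n} (hv : ∑ i, v i = 0) (h0 : v ≠ 0) : 0 < simplexGauge v := by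
  obtain ⟨i, hi⟩ : ∃ i, v i < 0 := by
    by_contra! h
    exact h0 (PiLp.ext fun i => congrFun ((Fintype.sum_eq_zero_iff_of_nonneg h).1 hv) i)
  have := le_simplexGauge v i
  nlinarith [(Nat.cast_pos.2 (NeZero.pos n) : (0 : ℝ) < n)]

lemma continuous_simplexGauge : Continuous (simplexGauge : Euc n → ℝ) :=
  Continuous.finset_sup'_apply _ fun i _ => (continuous_const.mul (PiLp.continuous_apply 2 _ i)).neg

/-- Radial rescaling of the hyperplane `∑ vᵢ = 0` taking the level sets of `simplexGauge` to
round spheres. -/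
def radialMap (v : Euc n) : Euc n := (simplexGauge v / ‖v‖) • v

def radialInv (b : Euc n) : Euc n := (‖b‖ / simplexGauge b) • b

lemma norm_radialMap (v : Euc n) : ‖radialMap v‖ = |simplexGauge v| := by
  rcases eq_or_ne v 0 with rfl | hv
  · simp [radialMap, simplexGauge_zero]
  · rw [radialMap, norm_smul, Real.norm_eq_abs, abs_div, abs_norm,
      div_mul_cancel₀ _ (norm_ne_zero_iff.2 hv)]

lemma simplexGauge_radialInv {b : Euc n} (hb : ∑ i, b i = 0) :
    simplexGauge (radialInv b) = ‖b‖ := by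
  rcases eq_or_ne b 0 with rfl | h0
  · simp [radialInv, simplexGauge_zero]
  · have := simplexGauge_pos hb h0
    rw [radialInv, simplexGauge_smul (by positivity), div_mul_cancel₀ _ this.ne']

lemma radialInv_radialMap {v : Euc n} (hv : ∑ i, v i = 0) : radialInv (radialMap v) = v := by
  rcases eq_or_ne v 0 with rfl | h0
  · simp [radialMap, radialInv]
  · have hm := simplexGauge_pos hv h0
    have hN := norm_pos_iff.2 h0
    rw [radialInv, norm_radialMap, abs_of_pos hm, radialMap, simplexGauge_smul (by positivity),
      smul_smul]
    convert one_smul ℝ v using 2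
    field_simp

lemma radialMap_radialInv {b : Euc n} (hb : ∑ i, b i = 0) : radialMap (radialInv b) = b := by
  rcases eq_or_ne b 0 with rfl | h0
  · simp [radialMap, radialInv]
  · have hm := simplexGauge_pos hb h0
    have hN := norm_pos_iff.2 h0
    rw [radialMap, simplexGauge_radialInv hb, radialInv, norm_smul, Real.norm_eq_abs,
      abs_of_pos (by positivity), smul_smul]
    convert one_smul ℝ b using 2
    field_simp

lemma continuous_radialMap : Continuous (radialMap : Euc n → Euc n) := by
  refine continuous_iff_continuousAt.2 fun v₀ => ?_
  rcases eq_or_ne v₀ 0 with rfl | h0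
  · have h := continuous_simplexGauge.abs.tendsto (0 : Euc n)
    rw [simplexGauge_zero, abs_zero] at h
    rw [ContinuousAt, show radialMap (0 : Euc n) = 0 by simp [radialMap]]
    exact squeeze_zero_norm (fun v => (norm_radialMap v).le) h
  · exact (continuous_simplexGauge.continuousAt.div continuous_norm.continuousAt
      (norm_ne_zero_iff.2 h0)).smul continuousAt_id

lemma sum_centeredSquares {x : Euc n} (hx : ‖x‖ = 1) : ∑ i, centeredSquares x i = 0 := by
  have hn : (n : ℝ) ≠ 0 := NeZero.ne _
  simp [sum_sub_distrib, sum_sq_eq_one_iff_norm_eq_one.2 hx, hn]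

lemma neg_mul_centeredSquares (x : Euc n) (i : Fin n) :
    -(n * centeredSquares x i) = 1 - n * x i ^ 2 := by
  rw [centeredSquares_apply, mul_sub, mul_one_div_cancel (NeZero.ne _)]
  ring

lemma simplexGauge_centeredSquares_le_one (x : Euc n) : simplexGauge (centeredSquares x) ≤ 1 :=
  simplexGauge_le_iff.2 fun i => by rw [neg_mul_centeredSquares]; nlinarith [sq_nonneg (x i)]

lemma simplexGauge_centeredSquares_eq_one_iff {x : Euc n} :
    simplexGauge (centeredSquares x) = 1 ↔ ∃ i, x i = 0 := by
  constructor
  · intro h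
    obtain ⟨i, -, hi⟩ := exists_mem_eq_sup' univ_nonempty fun i => -(n * centeredSquares x i)
    refine ⟨i, ?_⟩
    have : (n : ℝ) * x i ^ 2 = 0 := by
      rw [← simplexGauge, h, neg_mul_centeredSquares] at hi
      linarith
    simpa [NeZero.ne] using this
  · rintro ⟨i, hi⟩
    refine le_antisymm (simplexGauge_centeredSquares_le_one x) ?_
    simpa [neg_mul_centeredSquares, hi] using le_simplexGauge (centeredSquares x) i

lemma exists_centeredSquares_eq {v : Euc n} (hv : ∑ i, v i = 0) (hv1 : simplexGauge v ≤ 1)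
    {t : ℝ} (ht : t < 0 → simplexGauge v < 1) :
    ∃ x : Euc n, ‖x‖ = 1 ∧ centeredSquares x = v ∧ (0 ≤ ∏ i, x i ↔ 0 ≤ t) := by
  have hn : (0 : ℝ) < n := Nat.cast_pos.2 (NeZero.pos n)
  have hscale : ∀ i, n * (v i + 1 / n) = 1 - -(n * v i) := fun i => by field_simp; ring
  have hy : ∀ i, 0 ≤ v i + 1 / n := fun i => by
    rw [← mul_nonneg_iff_of_pos_left hn, hscale]
    linarith [le_simplexGauge v i]
  have hy' : t < 0 → ∀ i, 0 < v i + 1 / n := fun ht' i => by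
    rw [← mul_pos_iff_of_pos_left hn, hscale]
    linarith [le_simplexGauge v i, ht ht']
  obtain ⟨x, hxsq, hxprod⟩ := exists_sq_eq_and_prod_nonneg_iff hy hy'
  refine ⟨WithLp.toLp 2 x, ?_, PiLp.ext fun i => by simp [hxsq], hxprod⟩
  rw [← sum_sq_eq_one_iff_norm_eq_one]
  simp [hxsq, sum_add_distrib, hv]

lemma exists_sum_eq_zero_add_const (w : Euc n) :
    ∃ b : Euc n, ∃ t : ℝ, ∑ i, b i = 0 ∧ ‖b‖ ^ 2 + t ^ 2 = ‖w‖ ^ 2 ∧ ∀ i, w i = b i + t / √n := by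
  have hn : (n : ℝ) ≠ 0 := NeZero.ne _
  set t := (∑ i, w i) / √n
  set b : Euc n := WithLp.toLp 2 fun i => w i - t / √n
  have hwb : ∀ i, w i = b i + t / √n := fun i => by simp [b]
  have hb : ∑ i, b i = 0 := by
    simp only [b, t, sum_sub_distrib, sum_const, card_univ, Fintype.card_fin,
      nsmul_eq_mul, div_div, Real.mul_self_sqrt (Nat.cast_nonneg n)]
    field_simp
    ring
  refine ⟨b, t, hb, ?_, hwb⟩
  have := sum_add_const_sq hb (t / √n)
  rw [div_pow, Real.sq_sqrt (Nat.cast_nonneg n), mul_div_cancel₀ _ hn] at this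
  rw [← this, EuclideanSpace.real_norm_sq_eq]
  simp [hwb]

/-- The sign of `∏ i, x i` chooses the hemisphere over the hyperplane `∑ vᵢ = 0`. -/
def foldHeight (x : Euc n) : ℝ :=
  if 0 ≤ ∏ i, x i then √(1 - simplexGauge (centeredSquares x) ^ 2)
  else -√(1 - simplexGauge (centeredSquares x) ^ 2)

def sphereFold (x : Euc n) : Euc n :=
  WithLp.toLp 2 fun i => radialMap (centeredSquares x) i + foldHeight x / √n

@[simp]
lemma sphereFold_apply (x : Euc n) (i : Fin n) :
    sphereFold x i = radialMap (centeredSquares x) i + foldHeight x / √n :=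
  rfl

lemma sphereFold_congr {x x' : Euc n} (hsq : ∀ i, x' i ^ 2 = x i ^ 2)
    (hprod : ∏ i, x' i = ∏ i, x i) : sphereFold x' = sphereFold x := by
  have : centeredSquares x' = centeredSquares x := PiLp.ext fun i => by simp [hsq]
  simp only [sphereFold, foldHeight, this, hprod]

lemma sum_radialMap_centeredSquares {x : Euc n} (hx : ‖x‖ = 1) :
    ∑ i, radialMap (centeredSquares x) i = 0 := by
  rw [radialMap, sum_smul_apply, sum_centeredSquares hx, mul_zero]

lemma sq_foldHeight {x : Euc n} (hx : ‖x‖ = 1) :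
    foldHeight x ^ 2 = 1 - simplexGauge (centeredSquares x) ^ 2 := by
  have h0 := simplexGauge_nonneg (sum_centeredSquares hx)
  have h1 := simplexGauge_centeredSquares_le_one x
  have h : 0 ≤ 1 - simplexGauge (centeredSquares x) ^ 2 := by nlinarith
  unfold foldHeight
  split_ifs <;> simp [Real.sq_sqrt h]

lemma norm_sphereFold {x : Euc n} (hx : ‖x‖ = 1) : ‖sphereFold x‖ = 1 := by
  rw [← sum_sq_eq_one_iff_norm_eq_one]
  simp only [sphereFold_apply]
  rw [sum_add_const_sq (sum_radialMap_centeredSquares hx), norm_radialMap, sq_abs, div_pow,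
    Real.sq_sqrt (Nat.cast_nonneg n), mul_div_cancel₀ _ (NeZero.ne _), sq_foldHeight hx]
  ring

lemma sum_sphereFold {x : Euc n} (hx : ‖x‖ = 1) : ∑ i, sphereFold x i = foldHeight x * √n := by
  have hn : 0 < √(n : ℝ) := Real.sqrt_pos.2 (Nat.cast_pos.2 (NeZero.pos n))
  simp only [sphereFold_apply, sum_add_distrib, sum_radialMap_centeredSquares hx, sum_const,
    card_univ, Fintype.card_fin, nsmul_eq_mul, zero_add]
  field_simp
  rw [Real.sq_sqrt (Nat.cast_nonneg n)]
  ring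

lemma sphereFold_eq_sphereFold_iff {x x' : Euc n} (hx : ‖x‖ = 1) (hx' : ‖x'‖ = 1) :
    sphereFold x' = sphereFold x ↔ (∀ i, x' i ^ 2 = x i ^ 2) ∧ ∏ i, x' i = ∏ i, x i := by
  refine ⟨fun h => ?_, fun h => sphereFold_congr h.1 h.2⟩
  have hheight : foldHeight x' = foldHeight x := by
    have := congrArg (fun w : Euc n => ∑ i, w i) h
    simp only [sum_sphereFold hx, sum_sphereFold hx'] at this
    exact mul_right_cancel₀ (Real.sqrt_pos.2 (Nat.cast_pos.2 (NeZero.pos n))).ne' this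
  have hcs : centeredSquares x' = centeredSquares x := by
    rw [← radialInv_radialMap (sum_centeredSquares hx'),
      ← radialInv_radialMap (sum_centeredSquares hx)]
    congr 1
    refine PiLp.ext fun i => ?_
    simpa [hheight] using congrArg (· i) h
  have hsq : ∀ i, x' i ^ 2 = x i ^ 2 := fun i => by simpa using congrArg (· i) hcs
  refine ⟨hsq, ?_⟩
  by_cases hm : simplexGauge (centeredSquares x) = 1
  · obtain ⟨i, hi⟩ := simplexGauge_centeredSquares_eq_one_iff.1 hm
    have hi' : x' i = 0 := by simpa [hi] using hsq i
    rw [prod_eq_zero (mem_univ i) hi', prod_eq_zero (mem_univ i) hi]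
  · -- The height is nonzero, and its sign is that of the product.
    have h0 := simplexGauge_nonneg (sum_centeredSquares hx)
    have h1 := lt_of_le_of_ne (simplexGauge_centeredSquares_le_one x) hm
    have hpos : 0 < √(1 - simplexGauge (centeredSquares x) ^ 2) := Real.sqrt_pos.2 (by nlinarith)
    refine eq_of_sq_eq_sq_of_nonneg_iff (by simp_rw [← prod_pow, hsq]) ?_
    rw [foldHeight, foldHeight, hcs] at hheight
    split_ifs at hheight <;> first | linarith | tauto

lemma sphereFold_surjective {w : Euc n} (hw : ‖w‖ = 1) :
    ∃ x : Euc n, ‖x‖ = 1 ∧ sphereFold x = w := by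
  obtain ⟨b, t, hb, hbt, hwb⟩ := exists_sum_eq_zero_add_const w
  rw [hw, one_pow] at hbt
  have hmv := simplexGauge_radialInv hb
  obtain ⟨x, hx, hcs, hxprod⟩ := exists_centeredSquares_eq (v := radialInv b) (t := t)
    (by simp only [radialInv, sum_smul_apply, hb, mul_zero])
    (by nlinarith [norm_nonneg b]) (fun ht => by nlinarith [norm_nonneg b])
  have hheight : foldHeight x = t := by
    rw [foldHeight, hcs, hmv, show 1 - ‖b‖ ^ 2 = t ^ 2 by linarith, Real.sqrt_sq_eq_abs]
    split_ifs with h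
    · exact abs_of_nonneg (hxprod.1 h)
    · rw [abs_of_neg (not_le.1 (mt hxprod.2 h)), neg_neg]
  refine ⟨x, hx, PiLp.ext fun i => ?_⟩
  rw [sphereFold_apply, hcs, radialMap_radialInv hb, hheight, hwb]

lemma continuous_foldHeight : Continuous (foldHeight : Euc n → ℝ) := by
  have hr : Continuous fun x : Euc n => √(1 - simplexGauge (centeredSquares x) ^ 2) :=
    (continuous_const.sub ((continuous_simplexGauge.comp continuous_centeredSquares).pow 2)).sqrt
  refine hr.if_le hr.neg continuous_const
    (continuous_finsetProd _ fun i _ => PiLp.continuous_apply 2 _ i) fun x hx => ?_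
  obtain ⟨i, -, hi⟩ := prod_eq_zero_iff.1 hx.symm
  simp [simplexGauge_centeredSquares_eq_one_iff.2 ⟨i, hi⟩]

lemma continuous_sphereFold : Continuous (sphereFold : Euc n → Euc n) :=
  (PiLp.continuous_toLp 2 _).comp <| continuous_pi fun i =>
    ((PiLp.continuous_apply 2 _ i).comp (continuous_radialMap.comp continuous_centeredSquares)).add
      (continuous_foldHeight.div_const _)

/-- Let `D⁺(n) ≤ SO(n)` be the group of all even sign changes of coordinates, i.e.
of diagonal orthogonal transformations `diag(ε₁, …, ε_n)` with `εᵢ = ±1` and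
`ε₁ ⋯ ε_n = 1`. Then `S^{n-1}/D⁺(n)` with the quotient topology is homeomorphic to
`S^{n-1}`. -/
theorem stmt_17 (n : ℕ) (hn : 1 ≤ n) (D : Subgroup (Orth n))
    (hD : ∀ g : Orth n, g ∈ D ↔ ∃ ε : Fin n → ℝ,
      (∀ i, ε i = 1 ∨ ε i = -1) ∧ (∏ i, ε i) = 1 ∧ ∀ (x : Euc n) (i : Fin n), g x i = ε i * x i) :
    Nonempty (Quotient (MulAction.orbitRel D (sphere (0 : Euc n) 1)) ≃ₜ
      sphere (0 : Euc n) 1) := by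
  have : NeZero n := ⟨by omega⟩
  let f : C(sphere (0 : Euc n) 1, sphere (0 : Euc n) 1) :=
    ⟨fun x => ⟨sphereFold x, mem_sphere_zero_iff_norm.2 (norm_sphereFold (norm_eq_of_mem_sphere x))⟩,
      (continuous_sphereFold.comp continuous_subtype_val).subtype_mk _⟩
  refine nonempty_quotient_homeomorph_of_eq_ker f (fun w => ?_) ?_
  · obtain ⟨x, hx, hxw⟩ := sphereFold_surjective (norm_eq_of_mem_sphere w)
    exact ⟨⟨x, mem_sphere_zero_iff_norm.2 hx⟩, Subtype.ext hxw⟩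
  · ext x' x
    rw [orbitRel_sphere_iff hD, Setoid.ker_def, Subtype.ext_iff]
    exact (sphereFold_eq_sphereFold_iff (norm_eq_of_mem_sphere x)
      (norm_eq_of_mem_sphere x')).symm
end
end
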